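/- arXiv:1201.1614 — 4 statements merged into one kernel-verified Lean document; each statement's English description precedes it below -/
import Mathlib

section
/- Let R be a commutative ring, 𝒥 an index set, Q : 𝒥 × ℤ → R an arbitrary function, and x : 𝒥 → Rˣ an assignment of units. For a ≥ 1, a tuple J = (j_1,…,j_a) ∈ 𝒥^a and c ∈ ℤ define Q^{(a)}_{J,c} = det( Q(j_ν, c−a−1+2μ) · x_{j_ν}^{μ−1} )_{1≤μ,ν≤a}, and set Q^{(0)}_{∅,c} = 1; write x_J = ∏_{l=1}^a x_{j_l}, J−j_k for the (a−1)-tuple obtained by deleting the k-th entry, and (j,J) for the (a+1)-tuple with j prepended. Then for every a ≥ 1, every c ∈ ℤ and all tuples J_1 = (i_1,…,i_a), J_2 = (j_1,…,j_a) ∈ 𝒥^a: Q^{(a)}_{J_1,c−1} · Q^{(a)}_{J_2,c+1} − Q^{(a)}_{J_1,c+1} · Q^{(a)}_{J_2,c−1} · x_{J_1} · x_{J_2}^{−1} = Σ_{k=1}^{a} (−1)^k · Q^{(a−1)}_{J_2−j_k, c} · Q^{(a+1)}_{(j_k,J_1), c} · x_{j_k}^{−1}. -/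
/-!
Let `A` and `B` be the `(a + 2) × (a + 1)` matrices whose row `r` has entries
`Q(j, c - a - 1 + 2r) x_j^r` for `j` running through `J₁` resp. `J₂`. Deleting the last row of `A`
gives the matrix of `Q^{(a+1)}_{J₁,c-1}`, deleting the first row gives that of `Q^{(a+1)}_{J₁,c+1}`
with its columns scaled by the `x_j`, and prepending the `k`-th column of `B` to `A` gives
`Q^{(a+2)}_{(j_k,J₁),c}`. Expand the latter along that first column and swap the two sums: the
inner sum over `k` is the Laplace expansion of the square matrix with row `r` of `B` on top of the
middle rows of `B`. For a middle row `r` this matrix has a repeated row; for the first `r` it is `B`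
without its last row, and for the last `r` a cyclic row permutation of `B` without its first row.
This leaves exactly the left-hand side.
-/

noncomputable section

/-- The Casorati-type determinant `Q^{(m)}_{T,c} = det( Q(t_ν, c−m−1+2μ) · x_{t_ν}^{μ−1} )`
(with `μ` running 1-based over `1,…,m`; for `m = 0` it is the empty determinant `1`). -/
def Qdet {R : Type*} [CommRing R] {J : Type*} (Q : J × ℤ → R) (x : J → Rˣ)
    (m : ℕ) (T : Fin m → J) (c : ℤ) : R :=
  Matrix.det (Matrix.of fun μ ν : Fin m =>
    Q (T ν, c - (m : ℤ) - 1 + 2 * (((μ : ℕ) + 1 : ℕ) : ℤ)) * ((x (T ν) : R)) ^ (μ : ℕ))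

open Finset

namespace Matrix

variable {R : Type*} [CommRing R] {n : ℕ}

theorem det_of_cons_eq_sum (v : Fin (n + 1) → R) (M : Fin n → Fin (n + 1) → R) :
    det (of (Fin.cons v M)) =
      ∑ k : Fin (n + 1), (-1) ^ (k : ℕ) * v k * det (of fun i j => M i (k.succAbove j)) := by
  rw [det_succ_row_zero]
  rfl

theorem det_of_cons_self (M : Fin n → Fin (n + 1) → R) (i : Fin n) :
    det (of (Fin.cons (M i) M)) = 0 :=
  det_zero_of_row_eq (i := 0) (j := i.succ) (Fin.succ_ne_zero i).symm rfl

theorem det_of_snoc (M : Fin n → Fin (n + 1) → R) (v : Fin (n + 1) → R) :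
    det (of (Fin.snoc M v)) = (-1) ^ n * det (of (Fin.cons v M)) := by
  rw [Fin.snoc_eq_cons_rotate]
  exact (det_permute (finRotate (n + 1)) (of (Fin.cons v M))).trans (by simp [sign_finRotate])

theorem det_of_cons_col_eq_sum (w : Fin (n + 1) → R) (A : Matrix (Fin (n + 1)) (Fin n) R) :
    det (of fun r => Fin.cons (w r) (A r)) =
      ∑ r : Fin (n + 1), (-1) ^ (r : ℕ) * w r * det (A.submatrix r.succAbove id) := by
  rw [det_succ_column_zero]
  rfl

theorem det_submatrix_castSucc_mul_det_submatrix_succ_sub_eq_sum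
    (A B : Matrix (Fin (n + 2)) (Fin (n + 1)) R) :
    det (A.submatrix Fin.castSucc id) * det (B.submatrix Fin.succ id) -
        det (A.submatrix Fin.succ id) * det (B.submatrix Fin.castSucc id) =
      ∑ k : Fin (n + 1), (-1) ^ ((k : ℕ) + 1) *
        det (B.submatrix (Fin.succ ∘ Fin.castSucc) k.succAbove) *
        det (of fun r => Fin.cons (B r k) (A r)) := by
  set M : Fin n → Fin (n + 1) → R := fun i => B i.castSucc.succ
  have hB_top : B.submatrix Fin.castSucc id = of (Fin.cons (B 0) M) := by
    ext i j
    cases i using Fin.cases <;> rfl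
  have hB_bot : B.submatrix Fin.succ id = of (Fin.snoc M (B (Fin.last _))) := by
    ext i j
    cases i using Fin.lastCases <;> simp [M, Fin.succ_last]
  have hsum : ∑ k : Fin (n + 1), (-1) ^ ((k : ℕ) + 1) *
        det (B.submatrix (Fin.succ ∘ Fin.castSucc) k.succAbove) *
        det (of fun r => Fin.cons (B r k) (A r)) =
      ∑ r : Fin (n + 2), -(-1) ^ (r : ℕ) * det (A.submatrix r.succAbove id) *
        det (of (Fin.cons (B r) M)) := by
    have hM : ∀ k : Fin (n + 1), B.submatrix (Fin.succ ∘ Fin.castSucc) k.succAbove =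
        of fun i j => M i (k.succAbove j) := fun _ => rfl
    simp_rw [hM, det_of_cons_col_eq_sum, det_of_cons_eq_sum, mul_sum]
    rw [sum_comm]
    refine sum_congr rfl fun r _ => sum_congr rfl fun k _ => ?_
    ring
  have hmid : ∀ i : Fin n, det (of (Fin.cons (B i.castSucc.succ) M)) = 0 :=
    det_of_cons_self M
  rw [hB_top, hB_bot, det_of_snoc, hsum, Fin.sum_univ_succ, Fin.sum_univ_castSucc]
  simp only [hmid, mul_zero, sum_const_zero, Fin.succAbove_zero, Fin.succ_last, Fin.succAbove_last,
    Fin.val_zero, Fin.val_last, Nat.succ_eq_add_one]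
  ring

end Matrix

theorem Fin.inv_prod_mul_prod_succAbove {G : Type*} [CommGroup G] {n : ℕ} (f : Fin (n + 1) → G)
    (k : Fin (n + 1)) : (∏ i, f i)⁻¹ * ∏ i, f (k.succAbove i) = (f k)⁻¹ := by
  rw [Fin.prod_univ_succAbove f k, mul_inv_rev, mul_right_comm, inv_mul_cancel, one_mul]

section Casorati

variable {R : Type*} [CommRing R] {J : Type*} (Q : J × ℤ → R) (x : J → Rˣ)

def casoratiMatrix (n : ℕ) {m : ℕ} (T : Fin m → J) (e : ℤ) : Matrix (Fin n) (Fin m) R :=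
  Matrix.of fun r ν => Q (T ν, e + 2 * (r : ℕ)) * (x (T ν) : R) ^ (r : ℕ)

theorem Qdet_eq_det_casoratiMatrix {m : ℕ} (T : Fin m → J) {c e : ℤ} (he : c - m + 1 = e) :
    Qdet Q x m T c = (casoratiMatrix Q x m T e).det := by
  subst he
  unfold Qdet casoratiMatrix
  congr 1
  ext μ ν
  simp only [Matrix.of_apply]
  push_cast
  ring_nf

theorem casoratiMatrix_submatrix_castSucc (n : ℕ) {m : ℕ} (T : Fin m → J) (e : ℤ) :
    (casoratiMatrix Q x (n + 1) T e).submatrix Fin.castSucc id = casoratiMatrix Q x n T e :=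
  rfl

theorem det_casoratiMatrix_submatrix_succ {m : ℕ} (T : Fin m → J) (e : ℤ) :
    ((casoratiMatrix Q x (m + 1) T e).submatrix Fin.succ id).det =
      (∏ ν, (x (T ν) : R)) * (casoratiMatrix Q x m T (e + 2)).det := by
  rw [← Matrix.det_mul_row]
  congr 1
  ext r ν
  simp only [casoratiMatrix, Matrix.submatrix_apply, Matrix.of_apply, Fin.val_succ, id]
  push_cast
  ring_nf

theorem casoratiMatrix_cons_col (n : ℕ) {m p : ℕ} (T₁ : Fin m → J) (T₂ : Fin p → J) (k : Fin p)
    (e : ℤ) :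
    (Matrix.of fun r => Fin.cons (casoratiMatrix Q x n T₂ e r k) (casoratiMatrix Q x n T₁ e r)) =
      casoratiMatrix Q x n (Fin.cons (T₂ k) T₁) e := by
  ext r s
  cases s using Fin.cases <;> rfl

theorem Qdet_pluecker_cleared (a : ℕ) (c : ℤ) (J1 J2 : Fin (a + 1) → J) :
    Qdet Q x (a + 1) J1 (c - 1) * ((∏ l, (x (J2 l) : R)) * Qdet Q x (a + 1) J2 (c + 1)) -
        (∏ l, (x (J1 l) : R)) * Qdet Q x (a + 1) J1 (c + 1) * Qdet Q x (a + 1) J2 (c - 1) =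
      ∑ k : Fin (a + 1), (-1 : R) ^ ((k : ℕ) + 1) *
        ((∏ l, (x (J2 (k.succAbove l)) : R)) * Qdet Q x a (J2 ∘ k.succAbove) c) *
        Qdet Q x (a + 2) (Fin.cons (J2 k) J1) c := by
  set A := casoratiMatrix Q x (a + 2) J1 (c - a - 1)
  set B := casoratiMatrix Q x (a + 2) J2 (c - a - 1)
  have hA_top : (A.submatrix Fin.castSucc id).det = Qdet Q x (a + 1) J1 (c - 1) := by
    rw [casoratiMatrix_submatrix_castSucc,
      Qdet_eq_det_casoratiMatrix Q x J1 (e := c - a - 1) (by push_cast; ring)]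
  have hB_top : (B.submatrix Fin.castSucc id).det = Qdet Q x (a + 1) J2 (c - 1) := by
    rw [casoratiMatrix_submatrix_castSucc,
      Qdet_eq_det_casoratiMatrix Q x J2 (e := c - a - 1) (by push_cast; ring)]
  have hA_bot : (A.submatrix Fin.succ id).det =
      (∏ l, (x (J1 l) : R)) * Qdet Q x (a + 1) J1 (c + 1) := by
    rw [det_casoratiMatrix_submatrix_succ,
      Qdet_eq_det_casoratiMatrix Q x J1 (e := c - a - 1 + 2) (by push_cast; ring)]
  have hB_bot : (B.submatrix Fin.succ id).det =
      (∏ l, (x (J2 l) : R)) * Qdet Q x (a + 1) J2 (c + 1) := by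
    rw [det_casoratiMatrix_submatrix_succ,
      Qdet_eq_det_casoratiMatrix Q x J2 (e := c - a - 1 + 2) (by push_cast; ring)]
  have hB_mid : ∀ k : Fin (a + 1), (B.submatrix (Fin.succ ∘ Fin.castSucc) k.succAbove).det =
      (∏ l, (x (J2 (k.succAbove l)) : R)) * Qdet Q x a (J2 ∘ k.succAbove) c := fun k => by
    rw [Qdet_eq_det_casoratiMatrix Q x (J2 ∘ k.succAbove) (e := c - a - 1 + 2) (by ring)]
    exact det_casoratiMatrix_submatrix_succ Q x (J2 ∘ k.succAbove) _
  have hAB : ∀ k : Fin (a + 1), (Matrix.of fun r => Fin.cons (B r k) (A r)).det =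
      Qdet Q x (a + 2) (Fin.cons (J2 k) J1) c := fun k => by
    rw [Qdet_eq_det_casoratiMatrix Q x _ (e := c - a - 1) (by push_cast; ring)]
    exact congrArg Matrix.det (casoratiMatrix_cons_col Q x _ J1 J2 k _)
  have key := Matrix.det_submatrix_castSucc_mul_det_submatrix_succ_sub_eq_sum A B
  rw [hA_top, hB_top, hA_bot, hB_bot] at key
  simpa only [hB_mid, hAB] using key

end Casorati

/-- The Plücker-type relation (Proposition 5.1 of the paper): for tuples
`J_1, J_2` of length `a+1 ≥ 1`,
`Q^{(a)}_{J_1,c−1} Q^{(a)}_{J_2,c+1} − Q^{(a)}_{J_1,c+1} Q^{(a)}_{J_2,c−1} x_{J_1} x_{J_2}⁻¹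
 = Σ_k (−1)^k Q^{(a−1)}_{J_2−j_k,c} Q^{(a+1)}_{(j_k,J_1),c} x_{j_k}⁻¹`
(here the tuple length is `a+1`, `k` runs 1-based over the entries of `J_2`). -/
theorem statement1 {R : Type*} [CommRing R] {J : Type*} (Q : J × ℤ → R) (x : J → Rˣ)
    (a : ℕ) (c : ℤ) (J1 J2 : Fin (a + 1) → J) :
    Qdet Q x (a + 1) J1 (c - 1) * Qdet Q x (a + 1) J2 (c + 1) -
        Qdet Q x (a + 1) J1 (c + 1) * Qdet Q x (a + 1) J2 (c - 1) *
          (∏ l, (x (J1 l) : R)) * (((∏ l, x (J2 l))⁻¹ : Rˣ) : R)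
      = ∑ k : Fin (a + 1),
          (-1 : R) ^ ((k : ℕ) + 1) * Qdet Q x a (J2 ∘ k.succAbove) c *
            Qdet Q x (a + 2) (Fin.cons (J2 k) J1) c * (((x (J2 k))⁻¹ : Rˣ) : R) := by
  set u := ∏ l, x (J2 l)
  have hu : ((u⁻¹ : Rˣ) : R) * ∏ l, (x (J2 l) : R) = 1 := by
    rw [← Units.coe_prod]
    exact u.inv_mul
  calc _ = (Qdet Q x (a + 1) J1 (c - 1) * ((∏ l, (x (J2 l) : R)) * Qdet Q x (a + 1) J2 (c + 1)) -
        (∏ l, (x (J1 l) : R)) * Qdet Q x (a + 1) J1 (c + 1) * Qdet Q x (a + 1) J2 (c - 1)) *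
          ((u⁻¹ : Rˣ) : R) := by
        linear_combination (-(Qdet Q x (a + 1) J1 (c - 1) * Qdet Q x (a + 1) J2 (c + 1))) * hu
    _ = _ := by rw [Qdet_pluecker_cleared, Finset.sum_mul]
    _ = _ := Finset.sum_congr rfl fun k _ => by
        rw [← Fin.inv_prod_mul_prod_succAbove (fun l => x (J2 l)) k]
        push_cast
        ring

end
end

section
/- For all increasing tuples J_1, J_2 ∈ 𝒥^n one has, in F: x_{J_1}^{−1/2} · h_{\overline{J_1^*}} · h_{J_2} − x_{J_2}^{−1/2} · h_{\overline{J_2^*}} · h_{J_1} = x_{J_1}^{−1} x_{J_2}^{−1} · Σ_{j ∈ J_2 ∩ J_1^*} x_{J_1}^{3/2} · x_j^{3/2} · (g_{j,J_1^*} / g_{j,J_2^*}) · h_{J_2∖{j}} · h_{\overline{J_1^*}∖{j̄}}, where the sum is over those entries j of J_2 that lie in the complement J_1^* of J_1. -/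
/- Setting: `F = ℚ(t_1,…,t_n)`.  The index set 𝒥 = {1,…,n,n̄,…,1̄} with the order
`1 ≺ ⋯ ≺ n ≺ n̄ ≺ ⋯ ≺ 1̄` is realized as `Fin (2*n)` with its natural order
(`j < n` unbarred, `j ≥ n` barred), and the bar involution `i ↦ ī` is `Fin.rev`.
`sqx j` is the square root `x_j^{1/2}` (so `sqx j = t_{j+1}` for `j < n` and
`sqx j = t_{2n−j}⁻¹` otherwise), and `xx j = x_j = (sqx j)²`. -/

noncomputable section

abbrev F (n : ℕ) : Type := FractionRing (MvPolynomial (Fin n) ℚ)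

def t (n : ℕ) (i : Fin n) : F n :=
  algebraMap (MvPolynomial (Fin n) ℚ) (F n) (MvPolynomial.X i)

/-- `x_j^{1/2}`. -/
def sqx (n : ℕ) (j : Fin (2 * n)) : F n :=
  if h : (j : ℕ) < n then t n ⟨j, h⟩
  else (t n ⟨2 * n - 1 - (j : ℕ), by have := j.isLt; omega⟩)⁻¹

/-- `x_j = (x_j^{1/2})²`. -/
def xx (n : ℕ) (j : Fin (2 * n)) : F n := (sqx n j) ^ 2

/-- `f_{j,k} = (1 + δ_{k,j̄} x_j⁻¹)/(1 − x_k x_j⁻¹)`. -/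
def ff (n : ℕ) (j k : Fin (2 * n)) : F n :=
  (1 + (if k = j.rev then (xx n j)⁻¹ else 0)) / (1 - xx n k * (xx n j)⁻¹)

/-- `g_{j,k} = f_{j,k} · x_k^{1−δ_{k,j̄}/2}` (i.e. the last factor is `x_k^{1/2}` if `k = j̄`
and `x_k` otherwise). -/
def gg (n : ℕ) (j k : Fin (2 * n)) : F n :=
  ff n j k * (if k = j.rev then sqx n k else xx n k)

/-- `h_J = ∏_{1≤i≤n, i∈J, ī∈J} (x_i^{1/2} + x_i^{−1/2})`. -/
def hh (n : ℕ) (J : Finset (Fin (2 * n))) : F n :=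
  ∏ j ∈ J.filter (fun j : Fin (2 * n) => (j : ℕ) < n ∧ j.rev ∈ J), (sqx n j + (sqx n j)⁻¹)

/-!
Substituting the explicit `g_{j,k}`, the factors `x_j^{1/2} + x_j^{-1/2}` coming from the pair
`{j, j̄}` cancel against those of the `h`'s, and the `j`-th summand becomes
`x_{J_1} x_{J_2} x_{J_1}^{-1/2} h_{J_2} h_{J_1^*}` times
`∏_{k ∈ J_2^*} (x_j - x_k) / ((x_j + 1) ∏_{k ∈ J_1^* ∖ j} (x_j - x_k))`.
These terms vanish for `j ∈ J_2^*`, so the sum runs over all of `J_1^*`; as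
`∏_{k ∈ J_2^*} (X - x_k)` is monic of degree `|J_1^*|`, Lagrange interpolation at the nodes `x_k`
(`k ∈ J_1^*`), evaluated at `-1`, sums them to `1 - ∏_{J_2^*} (1 + x_k) / ∏_{J_1^*} (1 + x_k)`.
Finally `h_{J^*} h_𝒥 = h_J x_J^{1/2} ∏_{k ∈ J^*} (1 + x_k)`, checked pair by pair, turns this
into the left-hand side.
-/

namespace Lagrange

open Polynomial Finset

theorem eval_nodal_neg_one {R ι : Type*} [CommRing R] (s : Finset ι) (v : ι → R) :
    (nodal s v).eval (-1) = (-1) ^ #s * ∏ i ∈ s, (1 + v i) := by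
  rw [eval_nodal, ← prod_neg]
  simp only [neg_add']

theorem sum_nodalWeight_mul_inv_sub_mul_eval {F ι : Type*} [Field F] [DecidableEq ι]
    {s : Finset ι} {v : ι → F} (hvs : Set.InjOn v s) {f : F[X]} (hf : f.Monic)
    (hdeg : f.natDegree = #s) {a : F} (ha : ∀ i ∈ s, a ≠ v i) :
    ∑ i ∈ s, nodalWeight s v i * (a - v i)⁻¹ * f.eval (v i) =
      f.eval a / (nodal s v).eval a - 1 := by
  have hf_deg : f.degree = #s := by rw [degree_eq_natDegree hf.ne_zero, hdeg]
  -- interpolate `f - nodal s v`, which has degree `< #s` and agrees with `f` at the nodes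
  have hp : (f - nodal s v).degree < #s := hf_deg ▸ degree_sub_lt_left
    (by rw [hf_deg, degree_nodal]) hf.ne_zero (by rw [hf.leadingCoeff, nodal_monic.leadingCoeff])
  have key := eval_interpolate_not_at_node (fun i => (f - nodal s v).eval (v i)) ha
  rw [← eq_interpolate hvs hp] at key
  simp only [eval_sub] at key
  rw [sum_congr rfl fun i hi => by rw [eval_nodal_at_node hi, sub_zero]] at key
  rw [eq_sub_iff_add_eq, eq_div_iff (eval_nodal_not_at_node ha)]
  linear_combination -key

end Lagrange

namespace BorelCharacter

open Finset Lagrange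

variable {n : ℕ}

section Indeterminates

open MvPolynomial

lemma algebraMap_injective :
    Function.Injective (algebraMap (MvPolynomial (Fin n) ℚ) (F n)) :=
  IsFractionRing.injective _ _

lemma t_ne_zero (i : Fin n) : t n i ≠ 0 := by
  simp [t, X_ne_zero]

lemma t_pow_two_injective : Function.Injective fun i : Fin n => t n i ^ 2 := by
  intro a b h
  have : (X a ^ 2 : MvPolynomial (Fin n) ℚ) = X b ^ 2 :=
    algebraMap_injective (by simpa [t] using h)
  simpa [X_pow_eq_monomial, monomial_eq_monomial_iff, Finsupp.single_eq_single_iff] using this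

lemma t_pow_two_mul_t_pow_two_ne_one (a b : Fin n) : t n a ^ 2 * t n b ^ 2 ≠ 1 := by
  have : (X a ^ 2 * X b ^ 2 : MvPolynomial (Fin n) ℚ) ≠ 1 := by
    rw [X_pow_eq_monomial, X_pow_eq_monomial, monomial_mul, ← C_1, C_apply, Ne,
      monomial_eq_monomial_iff]
    simp
  simpa [t] using algebraMap_injective.ne this

lemma t_pow_two_ne_neg_one (a : Fin n) : t n a ^ 2 ≠ -1 := by
  have : (X a ^ 2 : MvPolynomial (Fin n) ℚ) ≠ -1 := by
    rw [X_pow_eq_monomial, ← C_1, ← C_neg, C_apply, Ne, monomial_eq_monomial_iff]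
    simp
  simpa [t] using algebraMap_injective.ne this

end Indeterminates

lemma rev_ne_self (j : Fin (2 * n)) : j.rev ≠ j := by
  intro h
  have := congrArg Fin.val h
  rw [Fin.val_rev] at this
  omega

lemma sqx_ne_zero (j : Fin (2 * n)) : sqx n j ≠ 0 := by
  unfold sqx
  split <;> simp [t_ne_zero]

lemma xx_ne_zero (j : Fin (2 * n)) : xx n j ≠ 0 := pow_ne_zero _ (sqx_ne_zero j)

lemma prod_sqx_ne_zero (J : Finset (Fin (2 * n))) : ∏ j ∈ J, sqx n j ≠ 0 :=
  prod_ne_zero_iff.mpr fun j _ => sqx_ne_zero j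

lemma prod_xx_ne_zero (J : Finset (Fin (2 * n))) : ∏ j ∈ J, xx n j ≠ 0 :=
  prod_ne_zero_iff.mpr fun j _ => xx_ne_zero j

lemma sqx_rev (j : Fin (2 * n)) : sqx n j.rev = (sqx n j)⁻¹ := by
  have := j.isLt
  have hrev : (j.rev : ℕ) = 2 * n - 1 - j := by rw [Fin.val_rev]; omega
  unfold sqx
  split_ifs <;> try simp only [inv_inv, inv_inj]
  all_goals first | omega | (congr 2 <;> omega)

lemma xx_rev (j : Fin (2 * n)) : xx n j.rev = (xx n j)⁻¹ := by
  rw [xx, xx, sqx_rev, inv_pow]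

lemma xx_of_lt {j : Fin (2 * n)} (h : (j : ℕ) < n) : xx n j = t n ⟨j, h⟩ ^ 2 := by
  rw [xx, sqx, dif_pos h]

lemma xx_of_not_lt {j : Fin (2 * n)} (h : ¬(j : ℕ) < n) :
    xx n j = (t n ⟨2 * n - 1 - j, by omega⟩ ^ 2)⁻¹ := by
  rw [xx, sqx, dif_neg h, inv_pow]

lemma xx_injective : Function.Injective (xx n) := by
  intro j k h
  by_cases hj : (j : ℕ) < n <;> by_cases hk : (k : ℕ) < n <;>
    simp only [xx_of_lt, xx_of_not_lt, hj, hk, not_false_eq_true] at h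
  · simpa [Fin.ext_iff] using t_pow_two_injective h
  · exact t_pow_two_mul_t_pow_two_ne_one _ _
      ((mul_eq_one_iff_inv_eq₀ (pow_ne_zero _ (t_ne_zero _))).mpr h.symm) |>.elim
  · exact t_pow_two_mul_t_pow_two_ne_one _ _
      ((mul_eq_one_iff_inv_eq₀ (pow_ne_zero _ (t_ne_zero _))).mpr h) |>.elim
  · have := t_pow_two_injective (inv_inj.mp h)
    simp only [Fin.mk.injEq] at this
    ext
    omega

lemma xx_sub_ne_zero {j k : Fin (2 * n)} (h : k ≠ j) : xx n j - xx n k ≠ 0 :=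
  sub_ne_zero.mpr (xx_injective.ne h.symm)

lemma xx_add_one_ne_zero (j : Fin (2 * n)) : xx n j + 1 ≠ 0 := by
  rw [Ne, add_eq_zero_iff_eq_neg]
  by_cases hj : (j : ℕ) < n
  · rw [xx_of_lt hj]
    exact t_pow_two_ne_neg_one _
  · rw [xx_of_not_lt hj, inv_eq_iff_eq_inv, inv_neg, inv_one]
    exact t_pow_two_ne_neg_one _

lemma prod_sqx_univ : ∏ j, sqx n j = 1 :=
  prod_ninvolution Fin.rev (fun j => by rw [sqx_rev, mul_inv_cancel₀ (sqx_ne_zero j)])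
    (fun j _ => rev_ne_self j) (fun _ => mem_univ _) Fin.rev_rev

lemma prod_xx_univ : ∏ j, xx n j = 1 := by
  simp only [xx, prod_pow, prod_sqx_univ, one_pow]

lemma prod_xx_compl (J : Finset (Fin (2 * n))) : ∏ j ∈ Jᶜ, xx n j = (∏ j ∈ J, xx n j)⁻¹ :=
  eq_inv_of_mul_eq_one_left (by rw [mul_comm, prod_mul_prod_compl, prod_xx_univ])

def hfac (n : ℕ) (j : Fin (2 * n)) : F n := sqx n j + (sqx n j)⁻¹

/-- What the pair `{j, j̄}` contributes to `h_{J ∪ {j}}` beyond `h_J`. -/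
def pairFac (n : ℕ) (J : Finset (Fin (2 * n))) (j : Fin (2 * n)) : F n :=
  if j.rev ∈ J then hfac n j else 1

lemma hfac_rev (j : Fin (2 * n)) : hfac n j.rev = hfac n j := by
  rw [hfac, hfac, sqx_rev, inv_inv, add_comm]

lemma sqx_mul_hfac (j : Fin (2 * n)) : sqx n j * hfac n j = xx n j + 1 := by
  rw [hfac, xx, mul_add, mul_inv_cancel₀ (sqx_ne_zero j)]
  ring

lemma hfac_ne_zero (j : Fin (2 * n)) : hfac n j ≠ 0 := fun h =>
  xx_add_one_ne_zero j (by rw [← sqx_mul_hfac, h, mul_zero])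

lemma pairFac_ne_zero (J : Finset (Fin (2 * n))) (j : Fin (2 * n)) : pairFac n J j ≠ 0 := by
  unfold pairFac
  split_ifs
  exacts [hfac_ne_zero j, one_ne_zero]

lemma pairFac_mul_pairFac_compl (J : Finset (Fin (2 * n))) (j : Fin (2 * n)) :
    pairFac n J j * pairFac n Jᶜ j = hfac n j := by
  by_cases h : j.rev ∈ J <;> simp [pairFac, h]

lemma pairFac_compl (J : Finset (Fin (2 * n))) (j : Fin (2 * n)) :
    pairFac n Jᶜ j = (xx n j + 1) / (sqx n j * pairFac n J j) := by
  rw [eq_div_iff (mul_ne_zero (sqx_ne_zero j) (pairFac_ne_zero J j)), ← sqx_mul_hfac,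
    ← pairFac_mul_pairFac_compl J]
  ring

lemma pairFac_erase (J : Finset (Fin (2 * n))) (j : Fin (2 * n)) :
    pairFac n (J.erase j) j = pairFac n J j := by
  simp [pairFac, rev_ne_self]

lemma hh_eq_prod_hfac (J : Finset (Fin (2 * n))) :
    hh n J = ∏ j ∈ J.filter (fun j : Fin (2 * n) => (j : ℕ) < n ∧ j.rev ∈ J), hfac n j := rfl

lemma hh_ne_zero (J : Finset (Fin (2 * n))) : hh n J ≠ 0 := by
  rw [hh_eq_prod_hfac]
  exact prod_ne_zero_iff.mpr fun j _ => hfac_ne_zero j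

lemma hh_image_rev (J : Finset (Fin (2 * n))) : hh n (J.image Fin.rev) = hh n J := by
  rw [hh_eq_prod_hfac, hh_eq_prod_hfac]
  congr 1
  ext k
  simp only [mem_filter, mem_image, Fin.rev_eq_iff, exists_eq_right, Fin.rev_rev]
  tauto

lemma hh_erase {J : Finset (Fin (2 * n))} {j : Fin (2 * n)} (hj : j ∈ J) :
    hh n J = hh n (J.erase j) * pairFac n J j := by
  rw [pairFac, hh_eq_prod_hfac, hh_eq_prod_hfac]
  split_ifs with hj'
  · -- `m` is the member of the pair `{j, j̄}` that indexes its factor in `h_J`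
    set m := if (j : ℕ) < n then j else j.rev
    have hm : hfac n m = hfac n j := by unfold m; split_ifs <;> simp [hfac_rev]
    have hmem : m ∈ J.filter (fun j : Fin (2 * n) => (j : ℕ) < n ∧ j.rev ∈ J) := by
      unfold m; split_ifs <;> simp [hj, hj'] <;> omega
    have hset : (J.erase j).filter (fun k : Fin (2 * n) => (k : ℕ) < n ∧ k.rev ∈ J.erase j) =
        (J.filter (fun k : Fin (2 * n) => (k : ℕ) < n ∧ k.rev ∈ J)).erase m := by
      ext k
      simp only [mem_filter, mem_erase, m]
      split_ifs <;> grind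
    rw [hset, ← hm, prod_erase_mul _ _ hmem]
  · have hset : (J.erase j).filter (fun k : Fin (2 * n) => (k : ℕ) < n ∧ k.rev ∈ J.erase j) =
        J.filter (fun k : Fin (2 * n) => (k : ℕ) < n ∧ k.rev ∈ J) := by
      ext k
      simp only [mem_filter, mem_erase]
      grind [Fin.rev_rev]
    rw [hset, mul_one]

lemma hh_mul_hh_univ (K : Finset (Fin (2 * n))) :
    hh n K * hh n univ = hh n Kᶜ * (∏ j ∈ Kᶜ, sqx n j) * ∏ k ∈ K, (1 + xx n k) := by
  induction K using Finset.induction_on with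
  | empty => simp [hh, prod_sqx_univ]
  | insert j K hj ih =>
    have hjc : j ∈ Kᶜ := mem_compl.mpr hj
    have hins : hh n (insert j K) = hh n K * pairFac n K j := by
      rw [hh_erase (mem_insert_self j K), erase_insert hj, ← pairFac_erase, erase_insert hj]
    rw [hh_erase hjc, ← mul_prod_erase _ _ hjc] at ih
    rw [hins, compl_insert, prod_insert hj]
    linear_combination pairFac n K j * ih
      + hh n (Kᶜ.erase j) * (∏ i ∈ Kᶜ.erase j, sqx n i) * (∏ k ∈ K, (1 + xx n k)) *
        (sqx n j * pairFac_mul_pairFac_compl K j + sqx_mul_hfac j)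

lemma hh_compl (J : Finset (Fin (2 * n))) :
    hh n Jᶜ = hh n J * (∏ j ∈ J, sqx n j) * (∏ k ∈ Jᶜ, (1 + xx n k)) / hh n univ :=
  eq_div_of_mul_eq (hh_ne_zero univ) (by rw [hh_mul_hh_univ, compl_compl])

lemma gg_eq {j k : Fin (2 * n)} (hkj : k ≠ j) :
    gg n j k = (if k = j.rev then hfac n j else 1) * (xx n k * xx n j / (xx n j - xx n k)) := by
  have hsub := xx_sub_ne_zero hkj
  rw [gg, ff]
  split_ifs with h
  · subst h
    have hs := sqx_ne_zero j
    rw [xx_rev] at hsub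
    rw [sqx_rev, xx_rev, hfac]
    simp only [xx] at hsub ⊢
    field_simp
  · have hx := xx_ne_zero j
    rw [add_zero]
    field_simp

lemma prod_erase_gg (E : Finset (Fin (2 * n))) (j : Fin (2 * n)) :
    ∏ k ∈ E.erase j, gg n j k =
      pairFac n E j * ((∏ k ∈ E.erase j, xx n k) * xx n j ^ #(E.erase j) *
        nodalWeight E (xx n) j) := by
  rw [prod_congr rfl fun k hk => gg_eq (ne_of_mem_erase hk), prod_mul_distrib, prod_ite_eq',
    ← pairFac_erase E j, pairFac, nodalWeight, prod_div_distrib, prod_mul_distrib, prod_const,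
    div_eq_mul_inv, prod_inv_distrib]

lemma summand_eq {J1 J2 : Finset (Fin (2 * n))} (hcard : #J1 = #J2) {j : Fin (2 * n)}
    (hj2 : j ∈ J2) (hj1 : j ∈ J1ᶜ) :
    (∏ i ∈ J1, sqx n i) ^ 3 * sqx n j ^ 3 *
        ((∏ k ∈ J1ᶜ.erase j, gg n j k) / (∏ k ∈ J2ᶜ.erase j, gg n j k)) *
        hh n (J2.erase j) * hh n ((J1ᶜ.image Fin.rev).erase j.rev) =
      -((∏ i ∈ J1, xx n i) * (∏ i ∈ J2, xx n i)) *
        ((∏ i ∈ J1, sqx n i)⁻¹ * hh n J2 * hh n J1ᶜ *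
          (nodalWeight J1ᶜ (xx n) j * (-1 - xx n j)⁻¹ * (nodal J2ᶜ (xx n)).eval (xx n j))) := by
  have hj2c : j ∉ J2ᶜ := fun h => mem_compl.mp h hj2
  have hcard' : #J2ᶜ = #(J1ᶜ.erase j) + 1 := by
    rw [card_erase_add_one hj1, card_compl, card_compl, hcard]
  have hxE1 : ∏ k ∈ J1ᶜ.erase j, xx n k = ((∏ i ∈ J1, xx n i) * xx n j)⁻¹ := by
    rw [mul_inv, ← prod_xx_compl, ← mul_prod_erase _ _ hj1]
    field_simp [xx_ne_zero j]
  have hxJ1 : ∏ i ∈ J1, xx n i = (∏ i ∈ J1, sqx n i) ^ 2 := prod_pow J1 2 (sqx n)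
  rw [← image_erase Fin.rev_injective, hh_image_rev, prod_erase_gg, prod_erase_gg,
    erase_eq_of_notMem hj2c, hh_erase hj2, hh_erase hj1, hxE1, prod_xx_compl, hcard',
    nodalWeight_eq_eval_nodal_erase_inv (s := J2ᶜ), erase_eq_of_notMem hj2c, pairFac_compl J2,
    hxJ1, pow_succ]
  have hN2 : (nodal J2ᶜ (xx n)).eval (xx n j) ≠ 0 :=
    eval_nodal_not_at_node fun k hk => xx_injective.ne fun h => hj2c (h ▸ hk)
  have := prod_sqx_ne_zero J1
  have := prod_xx_ne_zero J2
  have := sqx_ne_zero j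
  have := xx_ne_zero j
  have := pairFac_ne_zero J2 j
  have hxj := xx_add_one_ne_zero j
  have : -1 - xx n j ≠ 0 := by rwa [← neg_add', neg_ne_zero, add_comm]
  field_simp
  rw [show xx n j = sqx n j ^ 2 from rfl]
  ring

lemma sum_inter_compl_nodalWeight {J1 J2 : Finset (Fin (2 * n))} (hcard : #J1 = #J2) :
    ∑ j ∈ J2 ∩ J1ᶜ, nodalWeight J1ᶜ (xx n) j * (-1 - xx n j)⁻¹ * (nodal J2ᶜ (xx n)).eval (xx n j) =
      (∏ k ∈ J2ᶜ, (1 + xx n k)) / (∏ k ∈ J1ᶜ, (1 + xx n k)) - 1 := by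
  have hcard' : #J2ᶜ = #J1ᶜ := by rw [card_compl, card_compl, hcard]
  rw [sum_subset inter_subset_right, sum_nodalWeight_mul_inv_sub_mul_eval xx_injective.injOn
      nodal_monic (by rw [natDegree_nodal, hcard'])
      fun j _ h => xx_add_one_ne_zero j (by rw [← h, neg_add_cancel]),
    eval_nodal_neg_one, eval_nodal_neg_one, hcard',
    mul_div_mul_left _ _ (pow_ne_zero _ (neg_ne_zero.mpr one_ne_zero))]
  intro j hj1 hj
  have hj2 : j ∈ J2ᶜ := mem_compl.mpr fun hj2 => hj (mem_inter.mpr ⟨hj2, hj1⟩)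
  rw [eval_nodal_at_node hj2, mul_zero]

end BorelCharacter

open BorelCharacter Finset in
theorem statement5_general (n : ℕ) (J1 J2 : Finset (Fin (2 * n)))
    (hJ1 : J1.card = n) (hJ2 : J2.card = n) :
    (∏ j ∈ J1, sqx n j)⁻¹ * hh n ((J1ᶜ).image Fin.rev) * hh n J2 -
        (∏ j ∈ J2, sqx n j)⁻¹ * hh n ((J2ᶜ).image Fin.rev) * hh n J1
      = (∏ j ∈ J1, xx n j)⁻¹ * (∏ j ∈ J2, xx n j)⁻¹ *
          ∑ j ∈ J2 ∩ J1ᶜ,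
            (∏ i ∈ J1, sqx n i) ^ 3 * (sqx n j) ^ 3 *
              ((∏ k ∈ (J1ᶜ).erase j, gg n j k) / (∏ k ∈ (J2ᶜ).erase j, gg n j k)) *
              hh n (J2.erase j) * hh n (((J1ᶜ).image Fin.rev).erase j.rev) := by
  have hcard : #J1 = #J2 := hJ1.trans hJ2.symm
  rw [sum_congr rfl fun j hj => summand_eq hcard (mem_inter.mp hj).1 (mem_inter.mp hj).2,
    ← mul_sum, ← mul_sum, sum_inter_compl_nodalWeight hcard, hh_image_rev, hh_image_rev,
    hh_compl J1, hh_compl J2]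
  have : ∏ k ∈ J1ᶜ, (1 + xx n k) ≠ 0 :=
    prod_ne_zero_iff.mpr fun k _ => by rw [add_comm]; exact xx_add_one_ne_zero k
  have := hh_ne_zero (n := n) univ
  have := prod_sqx_ne_zero J1
  have := prod_sqx_ne_zero J2
  have := prod_xx_ne_zero J1
  have := prod_xx_ne_zero J2
  field_simp
  ring

/-- Proposition of Appendix C of the paper (the character specialization of the conjectural
quadratic relations for `U_q(B_n^{(1)})`): for `J_1, J_2 ∈ 𝒥^n` increasing (i.e. `n`-element
subsets of 𝒥),
`x_{J_1}^{−1/2} h_{\overline{J_1^*}} h_{J_2} − x_{J_2}^{−1/2} h_{\overline{J_2^*}} h_{J_1}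
 = x_{J_1}^{−1} x_{J_2}^{−1} Σ_{j ∈ J_2 ∩ J_1^*} x_{J_1}^{3/2} x_j^{3/2}
     (g_{j,J_1^*}/g_{j,J_2^*}) h_{J_2∖{j}} h_{\overline{J_1^*}∖{j̄}}`. -/
theorem statement5 (n : ℕ) (hn : 1 ≤ n) (J1 J2 : Finset (Fin (2 * n)))
    (hJ1 : J1.card = n) (hJ2 : J2.card = n) :
    (∏ j ∈ J1, sqx n j)⁻¹ * hh n ((J1ᶜ).image Fin.rev) * hh n J2 -
        (∏ j ∈ J2, sqx n j)⁻¹ * hh n ((J2ᶜ).image Fin.rev) * hh n J1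
      = (∏ j ∈ J1, xx n j)⁻¹ * (∏ j ∈ J2, xx n j)⁻¹ *
          ∑ j ∈ J2 ∩ J1ᶜ,
            (∏ i ∈ J1, sqx n i) ^ 3 * (sqx n j) ^ 3 *
              ((∏ k ∈ (J1ᶜ).erase j, gg n j k) / (∏ k ∈ (J2ᶜ).erase j, gg n j k)) *
              hh n (J2.erase j) * hh n (((J1ᶜ).image Fin.rev).erase j.rev) :=
  statement5_general n J1 J2 hJ1 hJ2

end
end

section
/- Suppose n ≥ 2, 0 ≤ m ≤ n and m ≡ n (mod 2). Then in ℤ[x_1,…,x_m,y_1,…,y_n]: δ_{m,n} · ∏_{j=1}^{n}(1−y_j²) · F^{(m,n)} = Σ_{J_1 ⊔ J_2 = {1,…,n}} (−1)^{δ(J_1,J_2)} · (∏_{j∈J_2} y_j) · G^{(m,n)}_{J_1,J_2}, where δ_{m,n} is the Kronecker delta; in particular the right-hand side vanishes identically unless m = n. -/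
/- Setting: the polynomial ring ℤ[x_1,…,x_m,y_1,…,y_n], realized as
`MvPolynomial (Fin m ⊕ Fin n) ℤ` with `Xv i = x_{i+1}` and `Yv j = y_{j+1}`.
For a partition `{1,…,n} = J_1 ⊔ J_2` (encoded by `J = J_1`, `Jᶜ = J_2`):
`Fpoly = ∏_{i<j≤m}(1−x_ix_j) ∏_{i<j≤n}(1−y_iy_j)(y_j−y_i)`,
`Gpoly J = ∏_{i≤m,j∈J_1}(1−x_iy_j) ∏_{i≤m,j∈J_2}(x_i−y_j) ∏_{i<j∈J_1}(y_j−y_i)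
           ∏_{i∈J_1,j∈J_2}(1−y_iy_j) ∏_{i<j∈J_2}(y_i−y_j)`,
`ddelta J = #{(i,j) ∈ J_1×J_2 : i < j}`. -/

noncomputable section

def Xv (m n : ℕ) (i : Fin m) : MvPolynomial (Fin m ⊕ Fin n) ℤ := MvPolynomial.X (Sum.inl i)

def Yv (m n : ℕ) (j : Fin n) : MvPolynomial (Fin m ⊕ Fin n) ℤ := MvPolynomial.X (Sum.inr j)

def Fpoly (m n : ℕ) : MvPolynomial (Fin m ⊕ Fin n) ℤ :=
  (∏ i : Fin m, ∏ j ∈ Finset.univ.filter (fun j => i < j), (1 - Xv m n i * Xv m n j)) *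
    ∏ i : Fin n, ∏ j ∈ Finset.univ.filter (fun j => i < j),
      ((1 - Yv m n i * Yv m n j) * (Yv m n j - Yv m n i))

def Gpoly (m n : ℕ) (J : Finset (Fin n)) : MvPolynomial (Fin m ⊕ Fin n) ℤ :=
  (∏ i : Fin m, ∏ j ∈ J, (1 - Xv m n i * Yv m n j)) *
    (∏ i : Fin m, ∏ j ∈ Jᶜ, (Xv m n i - Yv m n j)) *
    (∏ i ∈ J, ∏ j ∈ J.filter (fun j => i < j), (Yv m n j - Yv m n i)) *
    (∏ i ∈ J, ∏ j ∈ Jᶜ, (1 - Yv m n i * Yv m n j)) *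
    (∏ i ∈ Jᶜ, ∏ j ∈ Jᶜ.filter (fun j => i < j), (Yv m n i - Yv m n j))

def ddelta (n : ℕ) (J : Finset (Fin n)) : ℕ :=
  ((J ×ˢ Jᶜ).filter (fun p => p.1 < p.2)).card

/-!
Induction on `n`. Regard both sides, for `n + 1` variables `y`, as polynomials in `y_{n+1}` over the
domain `ℤ[x, y_1, …, y_n]`: both have degree at most `m + n + 1`, so it suffices that they agree at
the `m + n + 2` distinct points `±1, y_1, …, y_n, x_1, …, x_m`.
* At `y_{n+1} = ±1` the left side has the factor `1 - y_{n+1}²`, and on the right the terms for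
  `J` and `J ∪ {n + 1}` cancel, since `m + n` is odd.
* At `y_{n+1} = y_k` both sides vanish because both are alternating in `y`: every factor attached
  to a pair `i < j` is antisymmetric in `(i, j)`.
* At `y_{n+1} = x_q` (after moving `x_q` to the last place, both sides being symmetric in `x`) the
  right side only keeps the terms with `n + 1 ∈ J_1`, and both sides split off the same factor
  times the identity for `(m - 1, n)`, which holds by induction.
Working with arbitrary commutative rings lets the induction hypothesis be evaluated at these points.
-/

namespace Fin

open Finset

variable {M : Type*} {n : ℕ}

theorem prod_finPairsLT [CommMonoid M] (f : (Σ _ : Fin n, Fin n) → M) :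
    ∏ x ∈ Equiv.Perm.finPairsLT n, f x = ∏ j, ∏ i ∈ Iio j, f ⟨j, i⟩ := by
  rw [show Equiv.Perm.finPairsLT n = univ.sigma fun j => Iio j by
    ext; simp [Equiv.Perm.mem_finPairsLT], prod_sigma]

theorem prod_Iio_eq_prod_Iio_perm [CommMonoid M] (g : Fin n → Fin n → M)
    (σ : Equiv.Perm (Fin n)) :
    ∏ j, ∏ i ∈ Iio j, g i j =
      ∏ j, ∏ i ∈ Iio j, if σ i < σ j then g (σ i) (σ j) else g (σ j) (σ i) := by
  simp only [← prod_finPairsLT (fun x => g x.2 x.1)]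
  rw [← prod_finPairsLT fun x =>
    if σ x.2 < σ x.1 then g (σ x.2) (σ x.1) else g (σ x.1) (σ x.2)]
  refine (prod_nbij (Equiv.Perm.signBijAux σ) Equiv.Perm.signBijAux_mem
    Equiv.Perm.signBijAux_injOn Equiv.Perm.signBijAux_surj fun x _ => ?_).symm
  simp only [Equiv.Perm.signBijAux]
  split_ifs <;> rfl

theorem prod_Iio_comp_perm_of_symm [CommMonoid M] {g : Fin n → Fin n → M}
    (hg : ∀ a b, g b a = g a b) (σ : Equiv.Perm (Fin n)) :
    ∏ j, ∏ i ∈ Iio j, g (σ i) (σ j) = ∏ j, ∏ i ∈ Iio j, g i j := by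
  rw [prod_Iio_eq_prod_Iio_perm g σ]
  refine prod_congr rfl fun j _ => prod_congr rfl fun i _ => ?_
  split_ifs <;> simp [hg]

theorem prod_Iio_comp_perm_of_antisymm [CommRing M] {g : Fin n → Fin n → M}
    (hg : ∀ a b, g b a = -g a b) (σ : Equiv.Perm (Fin n)) :
    ∏ j, ∏ i ∈ Iio j, g (σ i) (σ j) = (σ.signAux : ℤ) * ∏ j, ∏ i ∈ Iio j, g i j := by
  have hsign : ((σ.signAux : ℤ) : M) = ∏ j, ∏ i ∈ Iio j, if σ j ≤ σ i then -1 else 1 := by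
    rw [Equiv.Perm.signAux, ← prod_finPairsLT (fun x => if σ x.1 ≤ σ x.2 then (-1 : M) else 1)]
    push_cast [Units.coe_prod, apply_ite]
    rfl
  rw [prod_Iio_eq_prod_Iio_perm g σ, hsign, ← prod_mul_distrib]
  refine prod_congr rfl fun j _ => ?_
  rw [← prod_mul_distrib]
  refine prod_congr rfl fun i hi => ?_
  have hne : σ i ≠ σ j := σ.injective.ne (mem_Iio.mp hi).ne
  rcases hne.lt_or_gt with h | h
  · rw [if_neg h.not_ge, if_pos h, one_mul]
  · rw [if_pos h.le, if_neg h.not_gt, hg, neg_one_mul]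

theorem prod_prod_filter_lt_eq_prod_Iio [CommMonoid M] (S T : Finset (Fin n))
    (f : Fin n → Fin n → M) :
    ∏ i ∈ S, ∏ j ∈ T with i < j, f i j =
      ∏ j, ∏ i ∈ Iio j, if i ∈ S ∧ j ∈ T then f i j else 1 := by
  simp only [← Fintype.prod_ite_mem (Iio _), mem_Iio]
  conv_rhs => rw [prod_comm]
  rw [← Fintype.prod_ite_mem S]
  refine prod_congr rfl fun i _ => ?_
  rw [prod_filter, ← Fintype.prod_ite_mem T]
  split_ifs with hi
  · refine prod_congr rfl fun j _ => ?_
    by_cases hj : j ∈ T <;> by_cases hij : i < j <;> simp [hi, hj, hij]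
  · simp [hi]

theorem prod_prod_of_disjoint [CommMonoid M] {S T : Finset (Fin n)} (hST : Disjoint S T)
    (f : Fin n → Fin n → M) :
    ∏ i ∈ S, ∏ j ∈ T, f i j =
      (∏ i ∈ S, ∏ j ∈ T with i < j, f i j) * ∏ j ∈ T, ∏ i ∈ S with j < i, f i j := by
  simp only [prod_filter]
  rw [prod_comm (s := T), ← prod_mul_distrib]
  refine prod_congr rfl fun i hi => ?_
  rw [← prod_mul_distrib]
  refine prod_congr rfl fun j hj => ?_
  have hij : i ≠ j := fun h => disjoint_left.mp hST hi (h ▸ hj)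
  rcases hij.lt_or_gt with h | h
  · simp [h, h.not_gt]
  · simp [h, h.not_gt]

theorem sum_finset_succ [AddCommMonoid M] (f : Finset (Fin (n + 1)) → M) :
    ∑ J, f J = ∑ J : Finset (Fin n),
      (f (J.map castSuccEmb) + f (insert (last n) (J.map castSuccEmb))) := by
  have hlast : last n ∉ univ.map castSuccEmb := by simp
  rw [← powerset_univ, univ_castSuccEmb, cons_eq_insert, sum_powerset_insert hlast,
    ← sum_add_distrib, map_eq_image, powerset_image, sum_image, powerset_univ]
  · simp [map_eq_image]
  · exact fun J _ K _ h => image_injective (castSucc_injective n) h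

end Fin

namespace Polynomial

theorem natDegree_prod_le_card_mul {ι R : Type*} [CommSemiring R] (s : Finset ι)
    (f : ι → R[X]) {d : ℕ} (h : ∀ i ∈ s, (f i).natDegree ≤ d) :
    (∏ i ∈ s, f i).natDegree ≤ s.card * d :=
  (natDegree_prod_le s f).trans (Finset.sum_le_card_nsmul s _ d h)

end Polynomial

namespace MvPolynomial

theorem injective_sumElim_X_one_neg_one {σ : Type*} :
    Function.Injective (Sum.elim (X : σ → MvPolynomial σ ℤ) ![1, -1]) := by
  have hX : ∀ (s : σ) (z : ℤ), z ≠ 0 → (X s : MvPolynomial σ ℤ) ≠ C z :=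
    fun s z hz h => hz <| by simpa using (congrArg constantCoeff h).symm
  have hC : (1 : MvPolynomial σ ℤ) ≠ -1 := by
    rw [← map_one C, ← map_neg C]
    exact fun h => absurd (C_injective σ ℤ h) (by decide)
  rintro (s | i) (t | j) h
  · exact congrArg _ (X_injective h)
  · fin_cases j
    · exact (hX s 1 one_ne_zero (by simpa using h)).elim
    · exact (hX s (-1) (by norm_num) (by simpa using h)).elim
  · fin_cases i
    · exact (hX t 1 one_ne_zero (by simpa using h.symm)).elim
    · exact (hX t (-1) (by norm_num) (by simpa using h.symm)).elim
  · fin_cases i <;> fin_cases j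
    · rfl
    · exact absurd h hC
    · exact absurd h.symm hC
    · rfl

end MvPolynomial

namespace PropD1

open Finset Polynomial

variable {R : Type*} [CommRing R] {m n : ℕ}

/- `summand x y J` is the term `(-1)^δ(J₁,J₂) (∏_{j ∈ J₂} y_j) G_{J₁,J₂}` of the sum, with its
factors grouped by their larger `y`-index (`summand_Xv_Yv`). The sign is absorbed into the factors
`y_i y_j - 1` with `i < j`, `i ∈ J₁`, `j ∈ J₂`; this makes `pairFactor` antisymmetric. -/
def pairFactor (y : Fin n → R) (J : Finset (Fin n)) (i j : Fin n) : R :=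
  if i ∈ J then (if j ∈ J then y j - y i else y i * y j - 1)
  else (if j ∈ J then 1 - y i * y j else y i - y j)

def mixedFactor (x : Fin m → R) (y : Fin n → R) (J : Finset (Fin n)) (i : Fin m) (j : Fin n) :
    R :=
  if j ∈ J then 1 - x i * y j else x i - y j

def column (x : Fin m → R) (y : Fin n → R) (J : Finset (Fin n)) (j : Fin n) : R :=
  (if j ∈ J then 1 else y j) * (∏ i, mixedFactor x y J i j) * ∏ i ∈ Iio j, pairFactor y J i j

def summand (x : Fin m → R) (y : Fin n → R) (J : Finset (Fin n)) : R :=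
  ∏ j, column x y J j

def rhs (x : Fin m → R) (y : Fin n → R) : R :=
  ∑ J, summand x y J

def lhs (m n : ℕ) (x : Fin m → R) (y : Fin n → R) : R :=
  (if m = n then 1 else 0) * (∏ j, (1 - y j ^ 2)) *
    ((∏ j, ∏ i ∈ Iio j, (1 - x i * x j)) * ∏ j, ∏ i ∈ Iio j, ((1 - y i * y j) * (y j - y i)))

def IdentityAt (m n : ℕ) : Prop :=
  ∀ (R : Type) [CommRing R] (x : Fin m → R) (y : Fin n → R), lhs m n x y = rhs x y

section Functoriality

variable {S : Type*} [CommRing S] (f : R →+* S) (x : Fin m → R) (y : Fin n → R)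

theorem map_summand (J : Finset (Fin n)) : f (summand x y J) = summand (f ∘ x) (f ∘ y) J := by
  simp only [summand, column, pairFactor, mixedFactor, map_prod, map_mul, map_sub, map_one,
    apply_ite f, Function.comp_apply]

theorem map_rhs : f (rhs x y) = rhs (f ∘ x) (f ∘ y) := by
  simp only [rhs, map_sum, map_summand]

theorem map_lhs : f (lhs m n x y) = lhs m n (f ∘ x) (f ∘ y) := by
  simp only [lhs, map_mul, map_prod, map_sub, map_one, map_pow, apply_ite f, map_zero,
    Function.comp_apply]

end Functoriality

section Symmetry

theorem pairFactor_swap (y : Fin n → R) (J : Finset (Fin n)) (i j : Fin n) :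
    pairFactor y J j i = -pairFactor y J i j := by
  unfold pairFactor
  split_ifs <;> ring

theorem summand_eq_prod_mul_prod_mul_prod (x : Fin m → R) (y : Fin n → R) (J : Finset (Fin n)) :
    summand x y J = (∏ j, if j ∈ J then 1 else y j) * (∏ j, ∏ i, mixedFactor x y J i j) *
      ∏ j, ∏ i ∈ Iio j, pairFactor y J i j := by
  simp only [summand, column, prod_mul_distrib]

theorem summand_comp_perm (x : Fin m → R) (y : Fin n → R) (J : Finset (Fin n))
    (σ : Equiv.Perm (Fin n)) :
    summand x (y ∘ σ) (σ.symm.finsetCongr J) = (σ.signAux : ℤ) * summand x y J := by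
  have hmem : ∀ j, j ∈ σ.symm.finsetCongr J ↔ σ j ∈ J := by simp [Equiv.finsetCongr_apply]
  have hpair : ∀ i j,
      pairFactor (y ∘ σ) (σ.symm.finsetCongr J) i j = pairFactor y J (σ i) (σ j) := by
    simp [pairFactor]
  simp only [summand_eq_prod_mul_prod_mul_prod, hpair,
    Fin.prod_Iio_comp_perm_of_antisymm (pairFactor_swap y J)]
  rw [← Equiv.prod_comp σ (fun j => if j ∈ J then 1 else y j),
    ← Equiv.prod_comp σ (fun j => ∏ i, mixedFactor x y J i j)]
  simp only [mixedFactor, hmem, Function.comp_apply]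
  ring

theorem rhs_comp_perm (x : Fin m → R) (y : Fin n → R) (σ : Equiv.Perm (Fin n)) :
    rhs x (y ∘ σ) = (σ.signAux : ℤ) * rhs x y := by
  rw [rhs, ← Equiv.sum_comp σ.symm.finsetCongr, rhs, mul_sum]
  exact sum_congr rfl fun J _ => summand_comp_perm x y J σ

theorem lhs_comp_perm (x : Fin m → R) (y : Fin n → R) (σ : Equiv.Perm (Fin n)) :
    lhs m n x (y ∘ σ) = (σ.signAux : ℤ) * lhs m n x y := by
  have hpair := Fin.prod_Iio_comp_perm_of_antisymm
    (g := fun i j => (1 - y i * y j) * (y j - y i)) (fun a b => by ring) σ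
  simp only [lhs, Function.comp_apply, hpair,
    Equiv.prod_comp σ (fun j => 1 - y j ^ 2)]
  ring

theorem summand_comp_perm_left (x : Fin m → R) (y : Fin n → R) (J : Finset (Fin n))
    (σ : Equiv.Perm (Fin m)) : summand (x ∘ σ) y J = summand x y J := by
  simp only [summand_eq_prod_mul_prod_mul_prod]
  congr 2
  exact prod_congr rfl fun j _ => Equiv.prod_comp σ (fun i => mixedFactor x y J i j)

theorem rhs_comp_perm_left (x : Fin m → R) (y : Fin n → R) (σ : Equiv.Perm (Fin m)) :
    rhs (x ∘ σ) y = rhs x y := by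
  simp only [rhs, summand_comp_perm_left]

theorem lhs_comp_perm_left (x : Fin m → R) (y : Fin n → R) (σ : Equiv.Perm (Fin m)) :
    lhs m n (x ∘ σ) y = lhs m n x y := by
  simp only [lhs, Function.comp_apply,
    Fin.prod_Iio_comp_perm_of_symm (g := fun i j => 1 - x i * x j) (fun a b => by ring) σ]

theorem eq_zero_of_alternating [NoZeroDivisors R] [CharZero R] {F : (Fin n → R) → R}
    (hF : ∀ y (σ : Equiv.Perm (Fin n)), F (y ∘ σ) = (σ.signAux : ℤ) * F y) {y : Fin n → R}
    {i j : Fin n} (hij : i ≠ j) (h : y i = y j) : F y = 0 := by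
  have hy : y ∘ Equiv.swap i j = y := by
    ext k
    rcases eq_or_ne k i with rfl | hki
    · simp [h]
    rcases eq_or_ne k j with rfl | hkj
    · simp [h]
    simp [Equiv.swap_apply_of_ne_of_ne hki hkj]
  have := hF y (Equiv.swap i j)
  rwa [hy, Equiv.Perm.signAux_swap hij, Units.val_neg, Units.val_one, Int.cast_neg, Int.cast_one,
    neg_one_mul, CharZero.eq_neg_self_iff] at this

end Symmetry

section LastIndex

theorem column_castSucc (x : Fin m → R) (y : Fin (n + 1) → R) {J : Finset (Fin (n + 1))}
    {J₀ : Finset (Fin n)} (hJ : ∀ j, j.castSucc ∈ J ↔ j ∈ J₀) (j : Fin n) :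
    column x y J j.castSucc = column x (Fin.init y) J₀ j := by
  simp only [column, mixedFactor, pairFactor, hJ, Fin.Iio_castSucc, prod_map,
    Fin.castSuccEmb_apply, Fin.init]

theorem column_last (x : Fin m → R) (y : Fin (n + 1) → R) (J : Finset (Fin (n + 1))) :
    column x y J (Fin.last n) = (if Fin.last n ∈ J then 1 else y (Fin.last n)) *
      (∏ i, mixedFactor x y J i (Fin.last n)) *
        ∏ i : Fin n, pairFactor y J i.castSucc (Fin.last n) := by
  rw [column, Fin.Iio_last_eq_map, prod_map]
  rfl

theorem summand_succ (x : Fin m → R) (y : Fin (n + 1) → R) {J : Finset (Fin (n + 1))}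
    {J₀ : Finset (Fin n)} (hJ : ∀ j, j.castSucc ∈ J ↔ j ∈ J₀) :
    summand x y J = summand x (Fin.init y) J₀ * column x y J (Fin.last n) := by
  simp only [summand, Fin.prod_univ_castSucc, column_castSucc x y hJ]

theorem rhs_succ (x : Fin m → R) (y : Fin (n + 1) → R) :
    rhs x y = ∑ J₀ : Finset (Fin n), summand x (Fin.init y) J₀ *
      (column x y (J₀.map Fin.castSuccEmb) (Fin.last n) +
        column x y (insert (Fin.last n) (J₀.map Fin.castSuccEmb)) (Fin.last n)) := by
  rw [rhs, Fin.sum_finset_succ]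
  refine sum_congr rfl fun J₀ _ => ?_
  rw [summand_succ x y (J₀ := J₀) (by simp),
    summand_succ x y (J₀ := J₀) (by simp [(Fin.castSucc_lt_last _).ne]), mul_add]

theorem column_last_map_eq_neg (x : Fin m → R) (y : Fin (n + 1) → R)
    (hu : y (Fin.last n) * y (Fin.last n) = 1) (hodd : Odd (m + n)) (J₀ : Finset (Fin n)) :
    column x y (J₀.map Fin.castSuccEmb) (Fin.last n) =
      -column x y (insert (Fin.last n) (J₀.map Fin.castSuccEmb)) (Fin.last n) := by
  set u := y (Fin.last n)
  set J := insert (Fin.last n) (J₀.map Fin.castSuccEmb)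
  have hL : Fin.last n ∉ J₀.map Fin.castSuccEmb := by simp [(Fin.castSucc_lt_last _).ne]
  have hmixed : ∀ i, mixedFactor x y (J₀.map Fin.castSuccEmb) i (Fin.last n) =
      -u * mixedFactor x y J i (Fin.last n) := by
    intro i
    simp only [mixedFactor, J, mem_insert_self, if_true, hL, if_false]
    linear_combination (-x i) * hu
  have hpair : ∀ i : Fin n, pairFactor y (J₀.map Fin.castSuccEmb) i.castSucc (Fin.last n) =
      -u * pairFactor y J i.castSucc (Fin.last n) := by
    intro i
    simp only [pairFactor, J, mem_insert_self, if_true, hL, if_false, mem_insert,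
      (Fin.castSucc_lt_last i).ne, false_or]
    split_ifs
    · linear_combination hu
    · linear_combination (-y i.castSucc) * hu
  obtain ⟨k, hk⟩ := hodd
  have hsign : u * ((-u) ^ m * (-u) ^ n) = -1 := by
    rw [← pow_add, hk, pow_succ, pow_mul, neg_sq, sq, hu]
    simp [hu]
  rw [column_last, column_last]
  simp only [hmixed, hpair, prod_mul_distrib, prod_const, card_univ, Fintype.card_fin,
    J, mem_insert_self, if_true, hL, if_false]
  linear_combination (∏ i, mixedFactor x y J i (Fin.last n)) *
    (∏ i : Fin n, pairFactor y J i.castSucc (Fin.last n)) * hsign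

theorem rhs_eq_zero_of_mul_self_last (x : Fin m → R) (y : Fin (n + 1) → R)
    (hu : y (Fin.last n) * y (Fin.last n) = 1) (hodd : Odd (m + n)) : rhs x y = 0 := by
  rw [rhs_succ]
  exact sum_eq_zero fun J₀ _ => by
    rw [column_last_map_eq_neg x y hu hodd, neg_add_cancel, mul_zero]

theorem lhs_eq_zero_of_mul_self_last (x : Fin m → R) (y : Fin (n + 1) → R)
    (hu : y (Fin.last n) * y (Fin.last n) = 1) : lhs m (n + 1) x y = 0 := by
  rw [lhs, prod_eq_zero (mem_univ (Fin.last n)) (by rw [sq, hu, sub_self]), mul_zero, zero_mul]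

def peelFactor (x : Fin (m + 1) → R) (y : Fin (n + 1) → R) : R :=
  (1 - y (Fin.last n) ^ 2) * (∏ i : Fin m, (1 - x i.castSucc * x (Fin.last m))) *
    ∏ j : Fin n, ((1 - y j.castSucc * y (Fin.last n)) * (y (Fin.last n) - y j.castSucc))

theorem lhs_succ_succ (x : Fin (m + 1) → R) (y : Fin (n + 1) → R) :
    lhs (m + 1) (n + 1) x y = peelFactor x y * lhs m n (Fin.init x) (Fin.init y) := by
  simp only [lhs, peelFactor, Fin.prod_univ_castSucc, Fin.Iio_castSucc, Fin.Iio_last_eq_map,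
    prod_map, Fin.castSuccEmb_apply, Nat.add_right_cancel_iff, Fin.init]
  ring

theorem summand_succ_left (x : Fin (m + 1) → R) (y : Fin n → R) (J : Finset (Fin n)) :
    summand x y J = summand (Fin.init x) y J * ∏ j, mixedFactor x y J (Fin.last m) j := by
  have hinit : ∀ i j, mixedFactor (Fin.init x) y J i j = mixedFactor x y J i.castSucc j :=
    fun _ _ => rfl
  simp only [summand, column, Fin.prod_univ_castSucc (fun i => mixedFactor x y J i _),
    prod_mul_distrib, hinit]
  ring

theorem rhs_eq_of_last_eq_last (x : Fin (m + 1) → R) (y : Fin (n + 1) → R)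
    (h : y (Fin.last n) = x (Fin.last m)) :
    rhs x y = peelFactor x y * rhs (Fin.init x) (Fin.init y) := by
  rw [rhs_succ, rhs, mul_sum]
  refine sum_congr rfl fun J₀ _ => ?_
  set J := insert (Fin.last n) (J₀.map Fin.castSuccEmb)
  have hL : Fin.last n ∉ J₀.map Fin.castSuccEmb := by simp [(Fin.castSucc_lt_last _).ne]
  have hJ : ∀ j : Fin n, j.castSucc ∈ J ↔ j ∈ J₀ := by simp [J, (Fin.castSucc_lt_last _).ne]
  have hzero : column x y (J₀.map Fin.castSuccEmb) (Fin.last n) = 0 := by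
    rw [column_last, prod_eq_zero (mem_univ (Fin.last m)) (by simp [mixedFactor, hL, h]),
      mul_zero, zero_mul]
  have hpeel : (∏ j, mixedFactor x (Fin.init y) J₀ (Fin.last m) j) * column x y J (Fin.last n) =
      peelFactor x y := by
    have hLJ : Fin.last n ∈ J := mem_insert_self _ _
    set b := x (Fin.last m)
    have hcol : ∀ j : Fin n, (1 - y j.castSucc * b) * (b - y j.castSucc) =
        (if j ∈ J₀ then b - y j.castSucc else 1 - y j.castSucc * b) *
          (if j ∈ J₀ then 1 - b * y j.castSucc else b - y j.castSucc) := fun j => by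
      split_ifs <;> ring
    rw [column_last, Fin.prod_univ_castSucc]
    simp only [peelFactor, mixedFactor, pairFactor, hLJ, hJ, if_true, Fin.init, h, hcol,
      prod_mul_distrib]
    ring
  rw [hzero, zero_add, summand_succ_left, mul_assoc, hpeel, mul_comm]

theorem lhs_eq_rhs_of_last_eq {R : Type} [CommRing R] (hmn : IdentityAt m n)
    (x : Fin (m + 1) → R) (y : Fin (n + 1) → R) (q : Fin (m + 1)) (h : y (Fin.last n) = x q) :
    lhs (m + 1) (n + 1) x y = rhs x y := by
  rw [← lhs_comp_perm_left x y (Equiv.swap q (Fin.last m)),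
    ← rhs_comp_perm_left x y (Equiv.swap q (Fin.last m)), lhs_succ_succ,
    rhs_eq_of_last_eq_last _ _ (by simpa using h), hmn]

end LastIndex

section Generic

variable {A : Type*} [CommRing A]

def genericY (c : Fin n → A) : Fin (n + 1) → A[X] :=
  Fin.snoc (fun j => C (c j)) X

theorem init_genericY (c : Fin n → A) : Fin.init (genericY c) = C ∘ c := by
  rw [genericY, Fin.init_snoc]
  rfl

theorem evalRingHom_comp_genericY (c : Fin n → A) (r : A) :
    evalRingHom r ∘ genericY c = Fin.snoc c r := by
  rw [genericY, Fin.comp_snoc]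
  congr 1
  · ext; simp
  · simp

theorem evalRingHom_comp_C (a : Fin m → A) (r : A) : evalRingHom r ∘ (C ∘ a) = a := by
  ext; simp

theorem eval_lhs_generic (a : Fin m → A) (c : Fin n → A) (r : A) :
    (lhs m (n + 1) (C ∘ a) (genericY c)).eval r = lhs m (n + 1) a (Fin.snoc c r) := by
  rw [← coe_evalRingHom, map_lhs, evalRingHom_comp_C, evalRingHom_comp_genericY]

theorem eval_rhs_generic (a : Fin m → A) (c : Fin n → A) (r : A) :
    (rhs (C ∘ a) (genericY c)).eval r = rhs a (Fin.snoc c r) := by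
  rw [← coe_evalRingHom, map_rhs, evalRingHom_comp_C, evalRingHom_comp_genericY]

theorem natDegree_column_last_le (a : Fin m → A) (c : Fin n → A) (J : Finset (Fin (n + 1))) :
    (column (C ∘ a) (genericY c) J (Fin.last n)).natDegree ≤ m + n + 1 := by
  have hdiag : (if Fin.last n ∈ J then 1 else genericY c (Fin.last n)).natDegree ≤ 1 := by
    simp only [genericY, Fin.snoc_last]
    split_ifs <;> compute_degree!
  have hmixed : (∏ i, mixedFactor (C ∘ a) (genericY c) J i (Fin.last n)).natDegree ≤ m := by
    refine (natDegree_prod_le_card_mul univ _ (d := 1) fun i _ => ?_).trans_eq (by simp)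
    simp only [mixedFactor, genericY, Fin.snoc_last, Function.comp_apply]
    split_ifs <;> compute_degree!
  have hpair :
      (∏ i : Fin n, pairFactor (genericY c) J i.castSucc (Fin.last n)).natDegree ≤ n := by
    refine (natDegree_prod_le_card_mul univ _ (d := 1) fun i _ => ?_).trans_eq (by simp)
    simp only [pairFactor, genericY, Fin.snoc_last, Fin.snoc_castSucc]
    split_ifs <;> compute_degree!
  rw [column_last]
  refine natDegree_mul_le.trans ?_
  have := (natDegree_mul_le (p := (if Fin.last n ∈ J then 1 else genericY c (Fin.last n)))).trans
    (add_le_add hdiag hmixed)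
  omega

theorem natDegree_rhs_generic_le (a : Fin m → A) (c : Fin n → A) :
    (rhs (C ∘ a) (genericY c)).natDegree ≤ m + n + 1 := by
  rw [rhs_succ]
  refine natDegree_sum_le_of_forall_le _ _ fun J₀ _ => ?_
  rw [init_genericY, ← map_summand]
  exact (natDegree_C_mul_le _ _).trans ((natDegree_add_le _ _).trans
    (max_le (natDegree_column_last_le a c _) (natDegree_column_last_le a c _)))

theorem natDegree_lhs_generic_le (a : Fin m → A) (c : Fin n → A) :
    (lhs m (n + 1) (C ∘ a) (genericY c)).natDegree ≤ m + n + 1 := by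
  by_cases hmn : m = n + 1
  · subst hmn
    rw [lhs_succ_succ, init_genericY, show Fin.init (C ∘ a) = C ∘ Fin.init a from rfl, ← map_lhs]
    refine (natDegree_mul_C_le _ _).trans ?_
    have hsq : (1 - genericY c (Fin.last n) ^ 2).natDegree ≤ 2 := by
      simp only [genericY, Fin.snoc_last]
      compute_degree
    have hx : (∏ i : Fin n, (1 - (C ∘ a) i.castSucc * (C ∘ a) (Fin.last n))).natDegree ≤ 0 := by
      refine (natDegree_prod_le_card_mul univ _ (d := 0) fun i _ => ?_).trans_eq (by simp)
      simp only [Function.comp_apply]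
      compute_degree!
    have hy : (∏ j : Fin n, ((1 - genericY c j.castSucc * genericY c (Fin.last n)) *
        (genericY c (Fin.last n) - genericY c j.castSucc))).natDegree ≤ 2 * n := by
      refine (natDegree_prod_le_card_mul univ _ (d := 2) fun i _ => ?_).trans_eq
        (by simp [mul_comm])
      simp only [genericY, Fin.snoc_last, Fin.snoc_castSucc]
      compute_degree!
    rw [peelFactor]
    refine natDegree_mul_le.trans ?_
    have := natDegree_mul_le.trans (add_le_add hsq hx)
    omega
  · rw [lhs, if_neg hmn, zero_mul, zero_mul, natDegree_zero]
    exact Nat.zero_le _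

end Generic

theorem lhs_eq_rhs_generic {A : Type} [CommRing A] [IsDomain A] [CharZero A] (a : Fin m → A)
    (c : Fin n → A) (hinj : Function.Injective (Sum.elim (Sum.elim a c) ![1, -1]))
    (hodd : Odd (m + n)) (ih : ∀ m', m = m' + 1 → IdentityAt m' n) :
    lhs m (n + 1) (C ∘ a) (genericY c) = rhs (C ∘ a) (genericY c) := by
  refine eq_of_natDegree_lt_card_of_eval_eq _ _ hinj ?_ ?_
  · rintro ((q | k) | b) <;>
      simp only [Sum.elim_inl, Sum.elim_inr, eval_lhs_generic, eval_rhs_generic]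
    · obtain ⟨m', rfl⟩ : ∃ m', m = m' + 1 := ⟨m - 1, by have := q.isLt; omega⟩
      exact lhs_eq_rhs_of_last_eq (ih m' rfl) a _ q (Fin.snoc_last _ _)
    · set y : Fin (n + 1) → A := Fin.snoc c (c k)
      have hk : y k.castSucc = y (Fin.last n) := by simp [y]
      rw [eq_zero_of_alternating (lhs_comp_perm a) (Fin.castSucc_lt_last k).ne hk,
        eq_zero_of_alternating (rhs_comp_perm a) (Fin.castSucc_lt_last k).ne hk]
    · set y : Fin (n + 1) → A := Fin.snoc c (![1, -1] b)
      have hu : y (Fin.last n) * y (Fin.last n) = 1 := by fin_cases b <;> simp [y]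
      rw [lhs_eq_zero_of_mul_self_last _ _ hu, rhs_eq_zero_of_mul_self_last _ _ hu hodd]
  · have := natDegree_lhs_generic_le a c
    have := natDegree_rhs_generic_le a c
    simp only [Fintype.card_sum, Fintype.card_fin]
    omega

theorem identityAt_succ (ih : ∀ m' ≤ n, m' % 2 = n % 2 → IdentityAt m' n) (hm : m ≤ n + 1)
    (hpar : m % 2 = (n + 1) % 2) : IdentityAt m (n + 1) := by
  intro R _ x y
  let a : Fin m → MvPolynomial (Fin m ⊕ Fin n) ℤ := fun i => MvPolynomial.X (Sum.inl i)
  let c : Fin n → MvPolynomial (Fin m ⊕ Fin n) ℤ := fun j => MvPolynomial.X (Sum.inr j)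
  have hinj : Function.Injective (Sum.elim (Sum.elim a c) ![1, -1]) := by
    rw [show Sum.elim a c = MvPolynomial.X from Sum.elim_comp_inl_inr (f := MvPolynomial.X)]
    exact MvPolynomial.injective_sumElim_X_one_neg_one
  have hgen := lhs_eq_rhs_generic a c hinj (Nat.odd_iff.mpr (by omega))
    fun m' hm' => ih m' (by omega) (by omega)
  let φ : (MvPolynomial (Fin m ⊕ Fin n) ℤ)[X] →+* R :=
    eval₂RingHom (MvPolynomial.eval₂Hom (Int.castRingHom R) (Sum.elim x (Fin.init y)))
      (y (Fin.last n))
  have hx : φ ∘ (C ∘ a) = x := by ext; simp [φ, a]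
  have hy : φ ∘ genericY c = y := by
    rw [genericY, Fin.comp_snoc]
    conv_rhs => rw [← Fin.snoc_init_self y]
    congr 1
    · ext; simp [φ, c, Fin.init]
    · simp [φ]
  simpa only [map_lhs, map_rhs, hx, hy] using congrArg φ hgen

theorem identityAt : ∀ n m, m ≤ n → m % 2 = n % 2 → IdentityAt m n
  | 0, m, hm, _ => by
    obtain rfl : m = 0 := by omega
    intro R _ x y
    simp [lhs, rhs, summand]
  | n + 1, _, hm, hpar => identityAt_succ (fun m' hm' hpar' => identityAt n m' hm' hpar') hm hpar

theorem lhs_Xv_Yv (m n : ℕ) : lhs m n (Xv m n) (Yv m n) =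
    (if m = n then 1 else 0) * (∏ j, (1 - Yv m n j ^ 2)) * Fpoly m n := by
  simp only [lhs, Fpoly, Fin.prod_prod_filter_lt_eq_prod_Iio univ univ, mem_univ, and_self,
    if_true]

theorem neg_one_pow_ddelta (J : Finset (Fin n)) :
    (-1 : R) ^ ddelta n J = ∏ j, ∏ i ∈ Iio j, if i ∈ J ∧ j ∈ Jᶜ then -1 else 1 := by
  rw [ddelta, ← prod_const, prod_filter, prod_product, ← Fin.prod_prod_filter_lt_eq_prod_Iio]
  simp only [prod_filter]

theorem prod_compl_eq_prod_ite (y : Fin n → R) (J : Finset (Fin n)) :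
    ∏ j ∈ Jᶜ, y j = ∏ j, if j ∈ J then 1 else y j := by
  rw [← Fintype.prod_ite_mem Jᶜ y]
  simp only [mem_compl, ite_not]

theorem prod_mixedFactor (x : Fin m → R) (y : Fin n → R) (J : Finset (Fin n)) :
    (∏ i, ∏ j ∈ J, (1 - x i * y j)) * (∏ i, ∏ j ∈ Jᶜ, (x i - y j)) =
      ∏ j, ∏ i, mixedFactor x y J i j := by
  rw [prod_comm, prod_comm (s := univ) (t := Jᶜ), ← Fintype.prod_ite_mem J,
    ← Fintype.prod_ite_mem Jᶜ, ← prod_mul_distrib]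
  refine prod_congr rfl fun j _ => ?_
  by_cases hj : j ∈ J <;> simp [mixedFactor, hj]

theorem pairFactor_eq_prod_ite (y : Fin n → R) (J : Finset (Fin n)) (i j : Fin n) :
    pairFactor y J i j = (if i ∈ J ∧ j ∈ Jᶜ then -1 else 1) *
      (if i ∈ J ∧ j ∈ J then y j - y i else 1) * (if i ∈ J ∧ j ∈ Jᶜ then 1 - y i * y j else 1) *
      (if i ∈ Jᶜ ∧ j ∈ J then 1 - y j * y i else 1) *
      (if i ∈ Jᶜ ∧ j ∈ Jᶜ then y i - y j else 1) := by
  by_cases hi : i ∈ J <;> by_cases hj : j ∈ J <;> simp [pairFactor, hi, hj, mul_comm]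

theorem summand_Xv_Yv (J : Finset (Fin n)) :
    (-1) ^ ddelta n J * (∏ j ∈ Jᶜ, Yv m n j) * Gpoly m n J = summand (Xv m n) (Yv m n) J := by
  rw [Gpoly, neg_one_pow_ddelta, prod_compl_eq_prod_ite, prod_mixedFactor,
    Fin.prod_prod_of_disjoint disjoint_compl_right, summand_eq_prod_mul_prod_mul_prod]
  simp only [Fin.prod_prod_filter_lt_eq_prod_Iio, pairFactor_eq_prod_ite, prod_mul_distrib]
  ring

end PropD1

theorem statement6_general (m n : ℕ) (hm : m ≤ n) (hpar : m % 2 = n % 2) :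
    (if m = n then 1 else 0 : MvPolynomial (Fin m ⊕ Fin n) ℤ) *
        (∏ j : Fin n, (1 - Yv m n j ^ 2)) * Fpoly m n
      = ∑ J : Finset (Fin n),
          (-1) ^ ddelta n J * (∏ j ∈ Jᶜ, Yv m n j) * Gpoly m n J := by
  rw [← PropD1.lhs_Xv_Yv, PropD1.identityAt n m hm hpar, PropD1.rhs]
  exact (Finset.sum_congr rfl fun J _ => PropD1.summand_Xv_Yv J).symm

/-- Proposition D.1 of the paper: for `n ≥ 2`, `0 ≤ m ≤ n`, `m ≡ n (mod 2)`,
`δ_{m,n} ∏_{j=1}^n (1−y_j²) F^{(m,n)}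
  = Σ_{J_1⊔J_2={1,…,n}} (−1)^{δ(J_1,J_2)} (∏_{j∈J_2} y_j) G^{(m,n)}_{J_1,J_2}`. -/
theorem statement6 (m n : ℕ) (hn : 2 ≤ n) (hm : m ≤ n) (hpar : m % 2 = n % 2) :
    (if m = n then 1 else 0 : MvPolynomial (Fin m ⊕ Fin n) ℤ) *
        (∏ j : Fin n, (1 - Yv m n j ^ 2)) * Fpoly m n
      = ∑ J : Finset (Fin n),
          (-1) ^ ddelta n J * (∏ j ∈ Jᶜ, Yv m n j) * Gpoly m n J :=
  statement6_general m n hm hpar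

end
end

section
/- Suppose m, n ≥ 1 and m ≡ n (mod 2). Then in ℤ[x_1,…,x_m,y_1,…,y_n]: R^{(m,n)} = det( y_i^{j−1} · ∏_{k=1}^{m}(1−x_k y_i) − y_i^{n−j+1} · ∏_{k=1}^{m}(y_i−x_k) )_{1≤i,j≤n}, where R^{(m,n)} := Σ_{J_1 ⊔ J_2 = {1,…,n}} (−1)^{δ(J_1,J_2)} · (∏_{j∈J_2} y_j) · G^{(m,n)}_{J_1,J_2}. -/
/- Setting: the polynomial ring ℤ[x_1,…,x_m,y_1,…,y_n], realized as
`MvPolynomial (Fin m ⊕ Fin n) ℤ` with `Xv i = x_{i+1}` and `Yv j = y_{j+1}`.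
For a partition `{1,…,n} = J_1 ⊔ J_2` (encoded by `J = J_1`, `Jᶜ = J_2`):
`Fpoly = ∏_{i<j≤m}(1−x_ix_j) ∏_{i<j≤n}(1−y_iy_j)(y_j−y_i)`,
`Gpoly J = ∏_{i≤m,j∈J_1}(1−x_iy_j) ∏_{i≤m,j∈J_2}(x_i−y_j) ∏_{i<j∈J_1}(y_j−y_i)
           ∏_{i∈J_1,j∈J_2}(1−y_iy_j) ∏_{i<j∈J_2}(y_i−y_j)`,
`ddelta J = #{(i,j) ∈ J_1×J_2 : i < j}`. -/

noncomputable section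

/-! Put `P(t) = ∏_k (1 - x_k t)` and `Q(t) = ∏_k (t - x_k)`. Since `y^{n-j} = y^n (y⁻¹)^j`, the
`i`-th row of the matrix is `P(y_i) (y_i^j)_j - y_i^n Q(y_i) ((y_i⁻¹)^j)_j`, so by multilinearity
the determinant is a sum over subsets `J` of Vandermonde determinants in the nodes `y_i` (`i ∈ J`)
and `y_i⁻¹` (`i ∉ J`). Clearing denominators in `∏_{i<j} (z_j - z_i)` turns each of them into the
`y`-part of `G_{J,Jᶜ}` up to the sign `(-1)^{δ(Jᶜ,J)}`, and the signs match those of `R^{(m,n)}`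
because `δ(J,Jᶜ) + δ(Jᶜ,J) = |J| |Jᶜ|` and `m ≡ n (mod 2)`. The `y_i` are invertible in the
fraction field of the polynomial ring, where the identity is proved. -/

namespace Finset

variable {ι M : Type*} [LinearOrder ι]

theorem card_filter_product_lt (A B : Finset ι) :
    ((A ×ˢ B).filter (fun p => p.1 < p.2)).card
      = ∑ a ∈ A, (B.filter (fun b => a < b)).card := by
  simp only [card_filter, sum_product]

theorem card_filter_product_lt_add_card_filter_product_lt {A B : Finset ι}
    (hAB : Disjoint A B) :
    ((A ×ˢ B).filter (fun p => p.1 < p.2)).card + ((B ×ˢ A).filter (fun p => p.1 < p.2)).card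
      = A.card * B.card := by
  have hswap : ((B ×ˢ A).filter (fun p => p.1 < p.2)).card
      = ((A ×ˢ B).filter (fun p => ¬ p.1 < p.2)).card := by
    refine card_nbij' Prod.swap Prod.swap ?_ ?_ (fun _ _ => rfl) (fun _ _ => rfl) <;>
      rintro ⟨a, b⟩ hp <;>
      simp only [coe_filter, mem_product, Set.mem_ofPred_eq, Prod.swap] at hp ⊢
    · exact ⟨hp.1.symm, not_lt.mpr hp.2.le⟩
    · exact ⟨hp.1.symm, lt_of_le_of_ne (not_lt.mp hp.2)
        fun h => disjoint_left.mp hAB (h ▸ hp.1.1) hp.1.2⟩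
  rw [hswap, card_filter_add_card_filter_not, card_product]

variable [Fintype ι] [CommMonoid M]

theorem prod_Ioi_eq_prod_filter_mul_prod_filter_compl [LocallyFiniteOrderTop ι]
    (J : Finset ι) (f : ι → M) (i : ι) :
    ∏ j ∈ Ioi i, f j
      = (∏ j ∈ J.filter (fun j => i < j), f j) * ∏ j ∈ Jᶜ.filter (fun j => i < j), f j := by
  rw [prod_filter, prod_filter, prod_mul_prod_compl, ← prod_filter]
  congr 1
  ext j
  simp

theorem prod_prod_filter_lt_mul_prod_prod_filter_lt_compl (J : Finset ι) (g : ι → ι → M)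
    (hg : ∀ i j, g i j = g j i) :
    (∏ i ∈ J, ∏ j ∈ Jᶜ.filter (fun j => i < j), g i j) *
        ∏ i ∈ Jᶜ, ∏ j ∈ J.filter (fun j => i < j), g i j
      = ∏ i ∈ J, ∏ j ∈ Jᶜ, g i j := by
  have hcomm : ∏ i ∈ Jᶜ, ∏ j ∈ J.filter (fun j => i < j), g i j
      = ∏ i ∈ J, ∏ j ∈ Jᶜ.filter (fun j => j < i), g i j := by
    rw [prod_comm' (t' := J) (s' := fun j => Jᶜ.filter (fun i => i < j))
      (by intro i j; simp only [mem_filter]; tauto)]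
    simp only [hg]
  rw [hcomm, ← prod_mul_distrib]
  refine prod_congr rfl fun i hi => ?_
  rw [prod_filter, prod_filter, ← prod_mul_distrib]
  refine prod_congr rfl fun j hj => ?_
  have hne : i ≠ j := fun h => mem_compl.mp hj (h ▸ hi)
  rcases hne.lt_or_gt with h | h <;> simp [h, h.not_gt]

end Finset

theorem Fin.prod_prod_Ioi_mul {M : Type*} [CommMonoid M] {n : ℕ} (d : Fin n → M) :
    ∏ i : Fin n, ∏ j ∈ Finset.Ioi i, (d i * d j) = ∏ k : Fin n, d k ^ (n - 1) := by
  have hswap : ∏ i : Fin n, ∏ j ∈ Finset.Ioi i, d j = ∏ k : Fin n, d k ^ (k : ℕ) := by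
    rw [Finset.prod_comm' (t' := Finset.univ) (s' := fun j => Finset.Iio j)
      (by intro i j; simp)]
    exact Finset.prod_congr rfl fun k _ => by rw [Finset.prod_const, Fin.card_Iio]
  simp only [Finset.prod_mul_distrib, Finset.prod_const, Fin.card_Ioi, hswap]
  rw [← Finset.prod_mul_distrib]
  exact Finset.prod_congr rfl fun k _ => by rw [← pow_add]; congr 1; have := k.isLt; omega

theorem ddelta_add_ddelta_compl {n : ℕ} (J : Finset (Fin n)) :
    ddelta n J + ddelta n Jᶜ = J.card * Jᶜ.card := by
  rw [ddelta, ddelta, compl_compl]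
  exact Finset.card_filter_product_lt_add_card_filter_product_lt disjoint_compl_right

theorem neg_one_pow_eq_of_parity {R : Type*} [Monoid R] [HasDistribNeg R] {m n a c d d' : ℕ}
    (hpar : m % 2 = n % 2) (hac : a + c = n) (hd : d + d' = a * c) :
    (-1 : R) ^ (d + m * c) = (-1) ^ (c + d') := by
  apply neg_one_pow_congr
  rw [← Nat.even_add]
  have : d + m * c + (c + d') = c * (a + m + 1) := by linarith
  rw [this, Nat.even_mul, Nat.even_add_one, Nat.even_add, Nat.even_iff, Nat.even_iff,
    Nat.even_iff, hpar, ← hac, Nat.add_mod]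
  omega

section

variable {R S : Type*} [CommRing R] [CommRing S] {m n : ℕ}

def mixedVandermonde (y : Fin n → R) (J : Finset (Fin n)) : R :=
  (∏ i ∈ J, ∏ j ∈ J.filter (fun j => i < j), (y j - y i)) *
    (∏ i ∈ J, ∏ j ∈ Jᶜ, (1 - y i * y j)) *
    (∏ i ∈ Jᶜ, ∏ j ∈ Jᶜ.filter (fun j => i < j), (y i - y j))

def gProduct (x : Fin m → R) (y : Fin n → R) (J : Finset (Fin n)) : R :=
  (∏ i : Fin m, ∏ j ∈ J, (1 - x i * y j)) * (∏ i : Fin m, ∏ j ∈ Jᶜ, (x i - y j)) *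
    mixedVandermonde y J

def signedSubsetSum (x : Fin m → R) (y : Fin n → R) : R :=
  ∑ J : Finset (Fin n), (-1) ^ ddelta n J * (∏ j ∈ Jᶜ, y j) * gProduct x y J

def signedSubsetSumMatrix (x : Fin m → R) (y : Fin n → R) : Matrix (Fin n) (Fin n) R :=
  Matrix.of fun i j => y i ^ (j : ℕ) * (∏ k, (1 - x k * y i)) - y i ^ (n - j) * ∏ k, (y i - x k)

theorem RingHom.map_signedSubsetSum (f : R →+* S) (x : Fin m → R) (y : Fin n → R) :
    f (signedSubsetSum x y) = signedSubsetSum (f ∘ x) (f ∘ y) := by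
  simp [signedSubsetSum, gProduct, mixedVandermonde]

theorem RingHom.mapMatrix_signedSubsetSumMatrix (f : R →+* S) (x : Fin m → R) (y : Fin n → R) :
    f.mapMatrix (signedSubsetSumMatrix x y) = signedSubsetSumMatrix (f ∘ x) (f ∘ y) := by
  ext i j
  simp [signedSubsetSumMatrix]

end

theorem Matrix.prod_pow_mul_det_vandermonde {R : Type*} [CommRing R] {n : ℕ} (d z : Fin n → R) :
    (∏ i, d i ^ (n - 1)) * (Matrix.vandermonde z).det
      = ∏ i, ∏ j ∈ Finset.Ioi i, d i * d j * (z j - z i) := by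
  rw [← Fin.prod_prod_Ioi_mul, Matrix.det_vandermonde, ← Finset.prod_mul_distrib]
  simp_rw [← Finset.prod_mul_distrib]

theorem Matrix.det_add_vandermonde {R : Type*} [CommRing R] {n : ℕ} (u v y w : Fin n → R) :
    (Matrix.of fun i j : Fin n => u i * y i ^ (j : ℕ) + v i * w i ^ (j : ℕ)).det
      = ∑ J : Finset (Fin n), (∏ i ∈ J, u i) * (∏ i ∈ Jᶜ, v i) *
          (Matrix.vandermonde (J.piecewise y w)).det := by
  let A : Fin n → Fin n → R := fun i j => u i * y i ^ (j : ℕ)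
  let B : Fin n → Fin n → R := fun i j => v i * w i ^ (j : ℕ)
  calc _ = Matrix.detRowAlternating (A + B) := rfl
    _ = ∑ J : Finset (Fin n), Matrix.detRowAlternating (J.piecewise A B) :=
      Matrix.detRowAlternating.map_add_univ A B
    _ = _ := by
      refine Finset.sum_congr rfl fun J _ => ?_
      have hrows : J.piecewise A B
          = Matrix.of fun i j => J.piecewise u v i * Matrix.vandermonde (J.piecewise y w) i j := by
        ext i j
        by_cases hi : i ∈ J <;> simp [A, B, hi]
      rw [hrows, ← Matrix.det, Matrix.det_mul_column, Finset.prod_piecewise, Finset.univ_inter,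
        ← Finset.compl_eq_univ_sdiff]

section

variable {K : Type*} [Field K] {m n : ℕ}

theorem prod_pow_mul_det_vandermonde_piecewise_inv (y : Fin n → K) (hy : ∀ i, y i ≠ 0)
    (J : Finset (Fin n)) :
    (∏ i ∈ Jᶜ, y i ^ (n - 1)) * (Matrix.vandermonde (J.piecewise y fun i => (y i)⁻¹)).det
      = (-1) ^ ddelta n Jᶜ * mixedVandermonde y J := by
  set z := J.piecewise y fun i => (y i)⁻¹
  set d : Fin n → K := J.piecewise 1 y
  have hd : ∏ i ∈ Jᶜ, y i ^ (n - 1) = ∏ i, d i ^ (n - 1) := by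
    rw [← Finset.prod_mul_prod_compl J (fun i => d i ^ (n - 1)),
      Finset.prod_eq_one (s := J) fun i hi => by simp [d, hi], one_mul]
    exact Finset.prod_congr rfl fun i hi => by simp [d, Finset.mem_compl.mp hi]
  have hJJ : ∀ i ∈ J, ∀ j ∈ J, d i * d j * (z j - z i) = y j - y i := by
    intro i hi j hj
    simp [d, z, hi, hj]
  have hJJc : ∀ i ∈ J, ∀ j ∈ Jᶜ, d i * d j * (z j - z i) = 1 - y i * y j := by
    intro i hi j hj
    simp only [d, z, Pi.one_apply, Finset.piecewise_eq_of_mem _ _ _ hi,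
      Finset.piecewise_eq_of_notMem _ _ _ (Finset.mem_compl.mp hj)]
    linear_combination mul_inv_cancel₀ (hy j)
  have hJcJ : ∀ i ∈ Jᶜ, ∀ j ∈ J, d i * d j * (z j - z i) = -(1 - y i * y j) := by
    intro i hi j hj
    simp only [d, z, Pi.one_apply, Finset.piecewise_eq_of_mem _ _ _ hj,
      Finset.piecewise_eq_of_notMem _ _ _ (Finset.mem_compl.mp hi)]
    linear_combination -mul_inv_cancel₀ (hy i)
  have hJcJc : ∀ i ∈ Jᶜ, ∀ j ∈ Jᶜ, d i * d j * (z j - z i) = y i - y j := by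
    intro i hi j hj
    simp only [d, z, Finset.piecewise_eq_of_notMem _ _ _ (Finset.mem_compl.mp hi),
      Finset.piecewise_eq_of_notMem _ _ _ (Finset.mem_compl.mp hj)]
    linear_combination y i * mul_inv_cancel₀ (hy j) - y j * mul_inv_cancel₀ (hy i)
  have hsign : ∏ i ∈ Jᶜ, ∏ j ∈ J.filter (fun j => i < j), -(1 - y i * y j)
      = (-1) ^ ddelta n Jᶜ * ∏ i ∈ Jᶜ, ∏ j ∈ J.filter (fun j => i < j), (1 - y i * y j) := by
    simp only [Finset.prod_neg, Finset.prod_mul_distrib, Finset.prod_pow_eq_pow_sum, ddelta,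
      compl_compl, Finset.card_filter_product_lt]
  rw [hd, Matrix.prod_pow_mul_det_vandermonde,
    Finset.prod_congr rfl fun i _ => Finset.prod_Ioi_eq_prod_filter_mul_prod_filter_compl J _ i,
    ← Finset.prod_mul_prod_compl J, Finset.prod_mul_distrib, Finset.prod_mul_distrib]
  have block : ∀ (A B : Finset (Fin n)) (g : Fin n → Fin n → K),
      (∀ i ∈ A, ∀ j ∈ B, d i * d j * (z j - z i) = g i j) →
        ∏ i ∈ A, ∏ j ∈ B.filter (fun j => i < j), d i * d j * (z j - z i)
          = ∏ i ∈ A, ∏ j ∈ B.filter (fun j => i < j), g i j :=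
    fun A B g h => Finset.prod_congr rfl fun i hi =>
      Finset.prod_congr rfl fun j hj => h i hi j (Finset.mem_filter.mp hj).1
  rw [block _ _ _ hJJ, block _ _ _ hJJc, block _ _ _ hJcJ, block _ _ _ hJcJc, hsign,
    mixedVandermonde, ← Finset.prod_prod_filter_lt_mul_prod_prod_filter_lt_compl J
      (fun i j => 1 - y i * y j) fun i j => by ring]
  ring

theorem signedSubsetSum_eq_det (hn : 1 ≤ n) (hpar : m % 2 = n % 2) (x : Fin m → K)
    (y : Fin n → K) (hy : ∀ i, y i ≠ 0) :
    signedSubsetSum x y = (signedSubsetSumMatrix x y).det := by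
  have hrows : signedSubsetSumMatrix x y = Matrix.of fun i j : Fin n =>
      (∏ k, (1 - x k * y i)) * y i ^ (j : ℕ) +
        -(y i ^ n * ∏ k, (y i - x k)) * (y i)⁻¹ ^ (j : ℕ) := by
    ext i j
    rw [signedSubsetSumMatrix, Matrix.of_apply, Matrix.of_apply,
      pow_sub₀ _ (hy i) j.isLt.le, inv_pow]
    ring
  rw [signedSubsetSum, hrows, Matrix.det_add_vandermonde]
  refine Finset.sum_congr rfl fun J _ => ?_
  have hxJ : ∏ i : Fin m, ∏ j ∈ J, (1 - x i * y j) = ∏ j ∈ J, ∏ k, (1 - x k * y j) :=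
    Finset.prod_comm
  have hxJc : ∏ i : Fin m, ∏ j ∈ Jᶜ, (x i - y j)
      = (-1) ^ (m * Jᶜ.card) * ∏ j ∈ Jᶜ, ∏ k, (y j - x k) := by
    simp only [Finset.prod_comm (s := Finset.univ), ← neg_sub (y _), Finset.prod_neg,
      Finset.card_univ, Fintype.card_fin, Finset.prod_mul_distrib, Finset.prod_const, pow_mul']
  have hcol : ∏ j ∈ Jᶜ, -(y j ^ n * ∏ k, (y j - x k))
      = (-1) ^ Jᶜ.card * (∏ j ∈ Jᶜ, y j) * (∏ j ∈ Jᶜ, y j ^ (n - 1)) *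
          ∏ j ∈ Jᶜ, ∏ k, (y j - x k) := by
    have hpow : ∀ j, y j ^ n = y j * y j ^ (n - 1) := fun j => by
      rw [← pow_succ', Nat.sub_add_cancel hn]
    simp only [Finset.prod_neg, hpow, Finset.prod_mul_distrib]
    ring
  have hsign : (-1 : K) ^ (ddelta n J + m * Jᶜ.card) = (-1) ^ (Jᶜ.card + ddelta n Jᶜ) :=
    neg_one_pow_eq_of_parity hpar (by simp [J.card_add_card_compl])
      (ddelta_add_ddelta_compl J)
  rw [gProduct, hxJ, hxJc, hcol]
  linear_combination (∏ j ∈ Jᶜ, y j) * (∏ j ∈ J, ∏ k, (1 - x k * y j)) *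
      (∏ j ∈ Jᶜ, ∏ k, (y j - x k)) * mixedVandermonde y J * hsign -
    (-1) ^ Jᶜ.card * (∏ j ∈ J, ∏ k, (1 - x k * y j)) * (∏ j ∈ Jᶜ, y j) *
      (∏ j ∈ Jᶜ, ∏ k, (y j - x k)) * prod_pow_mul_det_vandermonde_piecewise_inv y hy J

end

theorem statement8_general (m n : ℕ) (hn : 1 ≤ n) (hpar : m % 2 = n % 2) :
    (∑ J : Finset (Fin n),
        (-1) ^ ddelta n J * (∏ j ∈ Jᶜ, Yv m n j) * Gpoly m n J)
      = Matrix.det (Matrix.of fun i j : Fin n =>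
          Yv m n i ^ (j : ℕ) * (∏ k : Fin m, (1 - Xv m n k * Yv m n i)) -
            Yv m n i ^ (n - (j : ℕ)) * (∏ k : Fin m, (Yv m n i - Xv m n k))) := by
  let φ := algebraMap (MvPolynomial (Fin m ⊕ Fin n) ℤ)
    (FractionRing (MvPolynomial (Fin m ⊕ Fin n) ℤ))
  have hφ : Function.Injective φ := IsFractionRing.injective _ _
  have hY : ∀ j, φ (Yv m n j) ≠ 0 := fun j =>
    (map_ne_zero_iff φ hφ).mpr (MvPolynomial.X_ne_zero _)
  have hfield := signedSubsetSum_eq_det hn hpar (φ ∘ Xv m n) (φ ∘ Yv m n) hY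
  rw [← φ.map_signedSubsetSum, ← φ.mapMatrix_signedSubsetSumMatrix, ← RingHom.map_det] at hfield
  have hG : ∀ J, Gpoly m n J = gProduct (Xv m n) (Yv m n) J := fun J => by
    simp only [Gpoly, gProduct, mixedVandermonde, mul_assoc]
  simp only [hG]
  exact hφ hfield

/-- The determinant representation of `R^{(m,n)}` from the proof of Proposition D.1
(polynomial form, after multiplying the `i`-th row by `y_i^{(m+n)/2}`): for `m, n ≥ 1` with
`m ≡ n (mod 2)`,
`R^{(m,n)} = det( y_i^{j−1} ∏_k (1−x_k y_i) − y_i^{n−j+1} ∏_k (y_i−x_k) )_{1≤i,j≤n}`. -/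
theorem statement8 (m n : ℕ) (hm : 1 ≤ m) (hn : 1 ≤ n) (hpar : m % 2 = n % 2) :
    (∑ J : Finset (Fin n),
        (-1) ^ ddelta n J * (∏ j ∈ Jᶜ, Yv m n j) * Gpoly m n J)
      = Matrix.det (Matrix.of fun i j : Fin n =>
          Yv m n i ^ (j : ℕ) * (∏ k : Fin m, (1 - Xv m n k * Yv m n i)) -
            Yv m n i ^ (n - (j : ℕ)) * (∏ k : Fin m, (Yv m n i - Xv m n k))) :=
  statement8_general m n hn hpar

end
end
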